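/- arXiv:2505.13947 — 6 statements merged into one kernel-verified Lean document; each statement's English description precedes it below -/
import Mathlib

section
/- In the recursive Gaussian variance estimation process with known mean, for every integer T ≥ 1 the population risk satisfies E[(σ̂_T² − σ²)²] = ((1 + 2/n)^T − 1)·σ⁴; consequently, for every fixed n ≥ 2, E[(σ̂_T² − σ²)²] → ∞ as T → ∞. -/
open MeasureTheory ProbabilityTheory Filter

/-- The chi-squared distribution with `k` degrees of freedom, as the Gamma
distribution with shape `k/2` and rate `1/2`. -/
noncomputable def chiSquared (k : ℝ) : Measure ℝ := gammaMeasure (k / 2) (1 / 2)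

/-!
Unrolling the recursion gives `σ̂_T² = σ² ∏_{t=1}^T C_t` with the `C_t` independent. The first
two moments `k` and `k (k + 2)` of `χ²(k)` give `E[C_t] = 1` and `E[C_t²] = 1 + 2/n`, so
`E[∏ C_t] = 1` and `E[(∏ C_t)²] = (1 + 2/n)^T`; hence the mean-square error is
`σ⁴ ((1 + 2/n)^T − 1)`, which grows geometrically in `T`.
-/

open Real Set in
lemma integral_pow_gammaMeasure {a r : ℝ} (ha : 0 < a) (hr : 0 < r) (k : ℕ) :
    ∫ x, x ^ k ∂gammaMeasure a r = Gamma (a + k) / (Gamma a * r ^ k) := by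
  have hdensity : ∀ x ∈ Ioi (0 : ℝ), gammaPDFReal a r x * x ^ k
      = r ^ a / Gamma a * (x ^ (a + k - 1) * exp (-(r * x))) := by
    intro x (hx : 0 < x)
    rw [gammaPDFReal, if_pos hx.le, show a + k - 1 = (a - 1) + (k : ℝ) by ring,
      rpow_add hx, rpow_natCast]
    ring
  have hΓ : Gamma a ≠ 0 := (Gamma_pos_of_pos ha).ne'
  calc ∫ x, x ^ k ∂gammaMeasure a r
      = ∫ x, gammaPDFReal a r x * x ^ k := by
        rw [gammaMeasure, integral_withDensity_eq_integral_toReal_smul (f := gammaPDF a r)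
          (measurable_gammaPDFReal a r).ennreal_ofReal
          (ae_of_all _ fun _ ↦ ENNReal.ofReal_lt_top)]
        simp only [gammaPDF, ENNReal.toReal_ofReal (gammaPDFReal_nonneg ha hr _), smul_eq_mul]
    _ = ∫ x in Ioi 0, gammaPDFReal a r x * x ^ k := by
        rw [← integral_Ici_eq_integral_Ioi, setIntegral_eq_integral_of_forall_compl_eq_zero]
        intro x hx
        rw [gammaPDFReal, if_neg (by simpa using hx), zero_mul]
    _ = Gamma (a + k) / (Gamma a * r ^ k) := by
        rw [setIntegral_congr_fun measurableSet_Ioi hdensity, integral_const_mul,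
          integral_rpow_mul_exp_neg_mul_Ioi (by positivity) hr, div_rpow zero_le_one hr.le,
          one_rpow, rpow_add hr, rpow_natCast]
        field_simp

lemma integral_id_chiSquared {k : ℝ} (hk : 0 < k) : ∫ x, x ∂chiSquared k = k := by
  have h := integral_pow_gammaMeasure (half_pos hk) one_half_pos 1
  simp only [pow_one, Nat.cast_one] at h
  rw [chiSquared, h, Real.Gamma_add_one (half_pos hk).ne']
  have := (Real.Gamma_pos_of_pos (half_pos hk)).ne'
  field_simp

lemma integral_sq_chiSquared {k : ℝ} (hk : 0 < k) : ∫ x, x ^ 2 ∂chiSquared k = k * (k + 2) := by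
  rw [chiSquared, integral_pow_gammaMeasure (half_pos hk) one_half_pos, Nat.cast_ofNat,
    show k / 2 + 2 = (k / 2 + 1) + 1 by ring, Real.Gamma_add_one (by positivity),
    Real.Gamma_add_one (half_pos hk).ne']
  have := (Real.Gamma_pos_of_pos (half_pos hk)).ne'
  field_simp

lemma eq_mul_prod_Icc_of_forall_succ {M : Type*} [CommMonoid M] {x c : ℕ → M}
    (h : ∀ t, x (t + 1) = x t * c (t + 1)) (T : ℕ) : x T = x 0 * ∏ i ∈ Finset.Icc 1 T, c i := by
  induction T with
  | zero => simp
  | succ T ih => rw [h, ih, Finset.prod_Icc_succ_top (by omega), mul_assoc]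

section Moments

variable {Ω : Type*} [MeasurableSpace Ω] {μ : Measure Ω}

lemma ProbabilityTheory.iIndepFun.integral_finset_prod_comp {ι : Type*} {X : ι → Ω → ℝ}
    (hX : iIndepFun X μ) (mX : ∀ i, AEMeasurable (X i) μ) {f : ℝ → ℝ} (hf : Measurable f)
    (s : Finset ι) :
    ∫ ω, ∏ i ∈ s, f (X i ω) ∂μ = ∏ i ∈ s, ∫ ω, f (X i ω) ∂μ := by
  simp_rw [← Finset.prod_coe_sort s]
  exact (hX.precomp Subtype.val_injective).integral_fun_prod_comp (fun i ↦ mX i)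
    (fun _ ↦ hf.aestronglyMeasurable)

lemma integral_comp_of_map_const_mul_eq {X : Ω → ℝ} (hX : AEMeasurable X μ) {c : ℝ} (hc : c ≠ 0)
    {ν : Measure ℝ} (h : μ.map (fun ω ↦ c * X ω) = ν) {f : ℝ → ℝ} (hf : Measurable f) :
    ∫ ω, f (X ω) ∂μ = ∫ y, f (y / c) ∂ν := by
  rw [← h, integral_map (f := fun y ↦ f (y / c)) (hX.const_mul c)
    (hf.comp (measurable_div_const c)).aestronglyMeasurable]
  simp only [mul_div_cancel_left₀ _ hc]

variable {X : Ω → ℝ} (hX : AEMeasurable X μ) {k : ℝ} (hk : 0 < k)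
  (h : μ.map (fun ω ↦ k * X ω) = chiSquared k)
include hX hk h

lemma integral_eq_one_of_map_const_mul_eq_chiSquared : ∫ ω, X ω ∂μ = 1 := by
  rw [integral_comp_of_map_const_mul_eq (f := fun x ↦ x) hX hk.ne' h measurable_id]
  simp only [integral_div, integral_id_chiSquared hk, div_self hk.ne']

lemma integral_sq_of_map_const_mul_eq_chiSquared : ∫ ω, X ω ^ 2 ∂μ = 1 + 2 / k := by
  rw [integral_comp_of_map_const_mul_eq (f := fun x ↦ x ^ 2) hX hk.ne' h
    (measurable_id.pow_const 2)]
  simp only [div_pow, integral_div, integral_sq_chiSquared hk]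
  field_simp

end Moments

lemma integral_sq_const_mul_sub_const {Ω : Type*} [MeasurableSpace Ω] {μ : Measure Ω}
    [IsProbabilityMeasure μ] {Y : Ω → ℝ} {m : ℝ} (h1 : ∫ ω, Y ω ∂μ = 1)
    (h2 : ∫ ω, Y ω ^ 2 ∂μ = m) (hm : m ≠ 0) (s : ℝ) :
    ∫ ω, (s * Y ω - s) ^ 2 ∂μ = (m - 1) * s ^ 2 := by
  have hY : Integrable Y μ := .of_integral_ne_zero (by rw [h1]; exact one_ne_zero)
  have hY2 : Integrable (fun ω ↦ Y ω ^ 2) μ := .of_integral_ne_zero (by rwa [h2])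
  have hexpand : (fun ω ↦ (s * Y ω - s) ^ 2)
      = fun ω ↦ s ^ 2 * Y ω ^ 2 - 2 * s ^ 2 * Y ω + s ^ 2 := by
    funext ω; ring
  rw [hexpand, integral_add (f := fun ω ↦ s ^ 2 * Y ω ^ 2 - 2 * s ^ 2 * Y ω)
      ((hY2.const_mul _).sub (hY.const_mul _)) (integrable_const _),
    integral_sub (hY2.const_mul _) (hY.const_mul _), integral_const_mul, integral_const_mul,
    h1, h2, integral_const, probReal_univ, one_smul]
  ring

/-- In the recursive Gaussian variance estimation process with known mean
(modelled by `σ̂₀² = σ²` and `σ̂_{t+1}² = σ̂_t² · C_{t+1}` with `C₁, C₂, …` i.i.d. and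
`n · C_t ~ χ²(n)`), for every `T ≥ 1` the population risk satisfies
`E[(σ̂_T² − σ²)²] = ((1 + 2/n)^T − 1) σ⁴`, and hence diverges as `T → ∞` for fixed `n ≥ 2`. -/
theorem stmt_0
    {Ω : Type} [MeasurableSpace Ω] (μ : Measure Ω) [IsProbabilityMeasure μ]
    (n : ℕ) (hn : 2 ≤ n) (σ2 : ℝ) (hσ2 : 0 < σ2)
    (C : ℕ → Ω → ℝ) (hCmeas : ∀ t, Measurable (C t))
    (hiid : iIndepFun C μ)
    (hlaw : ∀ t, Measure.map (fun ω => (n : ℝ) * C t ω) μ = chiSquared n)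
    (sigma2hat : ℕ → Ω → ℝ)
    (h0 : ∀ ω, sigma2hat 0 ω = σ2)
    (hrec : ∀ t ω, sigma2hat (t + 1) ω = sigma2hat t ω * C (t + 1) ω) :
    (∀ T : ℕ, 1 ≤ T →
      ∫ ω, (sigma2hat T ω - σ2) ^ 2 ∂μ = ((1 + 2 / (n : ℝ)) ^ T - 1) * σ2 ^ 2) ∧
    Tendsto (fun T : ℕ => ∫ ω, (sigma2hat T ω - σ2) ^ 2 ∂μ) atTop atTop := by
  have hn0 : (0 : ℝ) < n := Nat.cast_pos.mpr (by omega)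
  have hC (t : ℕ) : AEMeasurable (C t) μ := (hCmeas t).aemeasurable
  have hsigma (T : ℕ) (ω : Ω) : sigma2hat T ω = σ2 * ∏ i ∈ Finset.Icc 1 T, C i ω := by
    rw [eq_mul_prod_Icc_of_forall_succ (x := (sigma2hat · ω)) (c := (C · ω))
      (fun t ↦ hrec t ω), h0]
  have hrisk (T : ℕ) :
      ∫ ω, (sigma2hat T ω - σ2) ^ 2 ∂μ = ((1 + 2 / (n : ℝ)) ^ T - 1) * σ2 ^ 2 := by
    have hmean : ∫ ω, ∏ i ∈ Finset.Icc 1 T, C i ω ∂μ = 1 := by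
      rw [hiid.integral_finset_prod_comp hC (f := fun x ↦ x) measurable_id]
      simp [integral_eq_one_of_map_const_mul_eq_chiSquared (hC _) hn0 (hlaw _)]
    have hsq : ∫ ω, (∏ i ∈ Finset.Icc 1 T, C i ω) ^ 2 ∂μ = (1 + 2 / (n : ℝ)) ^ T := by
      simp_rw [← Finset.prod_pow]
      rw [hiid.integral_finset_prod_comp hC (f := fun x ↦ x ^ 2) (measurable_id.pow_const 2)]
      simp [integral_sq_of_map_const_mul_eq_chiSquared (hC _) hn0 (hlaw _)]
    simp_rw [hsigma]
    exact integral_sq_const_mul_sub_const hmean hsq (by positivity) σ2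
  refine ⟨fun T _ ↦ hrisk T, ?_⟩
  simp_rw [hrisk]
  refine Tendsto.atTop_mul_const (by positivity) (tendsto_atTop_add_const_right _ (-1) ?_)
  exact tendsto_pow_atTop_atTop_of_one_lt (by simp [hn0])
end

section
/- In the recursive Gaussian variance estimation process with known mean, the diversity vanishes: for every n ≥ 2 and every ε > 0, lim_{T→∞} P(σ̂_T² ≤ ε) = 1. -/
/-!
Since `σ̂_T² = σ² C_1 ⋯ C_T` with `E[C_t] = 1`, the strict AM–GM inequality `√y < (1 + y) / 2`
for `y ≠ 1`, together with the absence of atoms in the chi-squared law, gives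
`ρ := E[√C_t] < 1`. By independence `E[√σ̂_T²] = σ ρ^T → 0`, so Markov's inequality for
`√σ̂_T²` gives `P(σ̂_T² > ε) → 0`.
-/

open MeasureTheory ProbabilityTheory Filter

open scoped ENNReal Topology
open Real Finset

lemma Real.sqrt_lt_one_add_div_two {y : ℝ} (hy : 0 ≤ y) (hy1 : y ≠ 1) :
    √y < (1 + y) / 2 := by
  have : √y ≠ 1 := fun h => hy1 (sqrt_eq_one.mp h)
  nlinarith [sq_sqrt hy, sq_pos_of_ne_zero (sub_ne_zero.mpr this)]

lemma Finset.eq_mul_prod_range_of_succ {M : Type*} [CommMonoid M] {s c : ℕ → M}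
    (h : ∀ t, s (t + 1) = s t * c (t + 1)) (T : ℕ) :
    s T = s 0 * ∏ i ∈ range T, c (i + 1) := by
  induction T with
  | zero => simp
  | succ T ih => rw [h, ih, prod_range_succ, mul_assoc]

namespace ProbabilityTheory

instance nullSingletonClass_gammaMeasure (a r : ℝ) :
    NullSingletonClass (gammaMeasure a r) := by
  unfold gammaMeasure
  infer_instance

lemma ofReal_abs_mul_gammaPDF {a r : ℝ} (ha : 0 < a) (hr : 0 < r) (x : ℝ) :
    ENNReal.ofReal |x| * gammaPDF a r x = ENNReal.ofReal (a / r) * gammaPDF (a + 1) r x := by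
  rcases lt_or_ge x 0 with hx | hx
  · simp [gammaPDF_of_neg hx]
  rw [gammaPDF_of_nonneg hx, gammaPDF_of_nonneg hx, abs_of_nonneg hx,
    ← ENNReal.ofReal_mul hx, ← ENNReal.ofReal_mul (div_nonneg ha.le hr.le),
    add_sub_cancel_right, Gamma_add_one ha.ne', rpow_add_one hr.ne']
  congr 1
  have hΓ : 0 < Gamma a := Gamma_pos_of_pos ha
  rcases hx.eq_or_lt with rfl | hx
  · simp [zero_rpow ha.ne']
  rw [rpow_sub_one hx.ne']
  field_simp

lemma lintegral_ofReal_abs_gammaMeasure {a r : ℝ} (ha : 0 < a) (hr : 0 < r) :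
    ∫⁻ x, ENNReal.ofReal |x| ∂gammaMeasure a r = ENNReal.ofReal (a / r) := by
  have hpdf (b : ℝ) : Measurable (gammaPDF b r) := (measurable_gammaPDFReal b r).ennreal_ofReal
  rw [gammaMeasure,
    lintegral_withDensity_eq_lintegral_mul _ (hpdf a) measurable_abs.ennreal_ofReal]
  simp_rw [Pi.mul_apply, mul_comm (gammaPDF a r _), ofReal_abs_mul_gammaPDF ha hr]
  rw [lintegral_const_mul _ (hpdf _), lintegral_gammaPDF_eq_one (by linarith) hr, mul_one]

lemma lintegral_sqrt_abs_div_lt_one {ν : Measure ℝ} [IsProbabilityMeasure ν]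
    [NullSingletonClass ν] {m : ℝ} (hm : 0 < m)
    (hmean : ∫⁻ x, ENNReal.ofReal |x| ∂ν = ENNReal.ofReal m) :
    ∫⁻ x, ENNReal.ofReal √(|x| / m) ∂ν < 1 := by
  set g : ℝ → ℝ≥0∞ := fun x => ENNReal.ofReal ((1 + |x| / m) / 2) with hg_def
  have hg_eq (x : ℝ) :
      g x = ENNReal.ofReal (1 / 2) + ENNReal.ofReal (1 / (2 * m)) * ENNReal.ofReal |x| := by
    rw [hg_def, ← ENNReal.ofReal_mul (by positivity),
      ← ENNReal.ofReal_add (by positivity) (by positivity)]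
    field_simp
  have hg : ∫⁻ x, g x ∂ν = 1 := by
    simp_rw [hg_eq]
    rw [lintegral_add_left measurable_const, lintegral_const_mul _ measurable_abs.ennreal_ofReal,
      hmean, lintegral_const, measure_univ, mul_one, ← ENNReal.ofReal_mul (by positivity),
      ← ENNReal.ofReal_add (by positivity) (by positivity),
      show 1 / 2 + 1 / (2 * m) * m = (1 : ℝ) by field_simp; norm_num, ENNReal.ofReal_one]
  have hlt : ∀ᵐ x ∂ν, ENNReal.ofReal √(|x| / m) < g x := by
    filter_upwards [ν.ae_ne m, ν.ae_ne (-m)] with x hxm hxm'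
    refine (ENNReal.ofReal_lt_ofReal_iff (by positivity)).mpr
      (sqrt_lt_one_add_div_two (by positivity) ?_)
    rw [Ne, div_eq_one_iff_eq hm.ne', abs_eq hm.le]
    tauto
  have hfin : ∫⁻ x, ENNReal.ofReal √(|x| / m) ∂ν ≠ ∞ :=
    ne_top_of_le_ne_top (hg ▸ ENNReal.one_ne_top) (lintegral_mono_ae (hlt.mono fun _ h => h.le))
  exact hg ▸ lintegral_strict_mono (IsProbabilityMeasure.ne_zero ν) (by fun_prop) hfin hlt

lemma lintegral_sqrt_abs_div_chiSquared_lt_one {k : ℝ} (hk : 0 < k) :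
    ∫⁻ x, ENNReal.ofReal √(|x| / k) ∂chiSquared k < 1 := by
  have := isProbabilityMeasure_gammaMeasure (half_pos hk) one_half_pos
  refine lintegral_sqrt_abs_div_lt_one (ν := gammaMeasure (k / 2) (1 / 2)) hk ?_
  rw [lintegral_ofReal_abs_gammaMeasure (half_pos hk) one_half_pos]
  congr 1
  field_simp

section Concentration

variable {Ω : Type*} [MeasurableSpace Ω] {μ : Measure Ω} {X : ℕ → Ω → ℝ}

lemma tendsto_measure_lt_of_lintegral_sqrt_abs_le (hX : ∀ T, Measurable (X T)) {c ρ : ℝ≥0∞}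
    (hc : c ≠ ∞) (hρ : ρ < 1) (hint : ∀ T, ∫⁻ ω, ENNReal.ofReal √|X T ω| ∂μ ≤ c * ρ ^ T)
    {ε : ℝ} (hε : 0 < ε) : Tendsto (fun T => μ {ω | ε < X T ω}) atTop (𝓝 0) := by
  have hε' : ENNReal.ofReal √ε ≠ 0 := by positivity
  have hmarkov (T : ℕ) : μ {ω | ε < X T ω} ≤ c * ρ ^ T / ENNReal.ofReal √ε := calc
    μ {ω | ε < X T ω} ≤ μ {ω | ENNReal.ofReal √ε ≤ ENNReal.ofReal √|X T ω|} :=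
      measure_mono fun ω hω =>
        ENNReal.ofReal_le_ofReal (sqrt_le_sqrt (hω.le.trans (le_abs_self _)))
    _ ≤ (∫⁻ ω, ENNReal.ofReal √|X T ω| ∂μ) / ENNReal.ofReal √ε :=
      meas_ge_le_lintegral_div (by fun_prop) hε' ENNReal.ofReal_ne_top
    _ ≤ c * ρ ^ T / ENNReal.ofReal √ε := by gcongr; exact hint T
  have hbound : Tendsto (fun T : ℕ => c * ρ ^ T / ENNReal.ofReal √ε) atTop (𝓝 0) := by
    simpa using ENNReal.Tendsto.div_const (ENNReal.Tendsto.const_mul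
      (ENNReal.tendsto_pow_atTop_nhds_zero_of_lt_one hρ) (Or.inr hc)) (Or.inr hε')
  exact tendsto_of_tendsto_of_tendsto_of_le_of_le tendsto_const_nhds hbound (fun _ => zero_le)
    hmarkov

lemma tendsto_toReal_measure_le_of_tendsto_measure_lt [IsProbabilityMeasure μ]
    (hX : ∀ T, Measurable (X T)) {ε : ℝ}
    (h : Tendsto (fun T => μ {ω | ε < X T ω}) atTop (𝓝 0)) :
    Tendsto (fun T => (μ {ω | X T ω ≤ ε}).toReal) atTop (𝓝 1) := by
  have hcompl (T : ℕ) : μ {ω | X T ω ≤ ε} = 1 - μ {ω | ε < X T ω} := by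
    rw [← prob_compl_eq_one_sub (measurableSet_lt measurable_const (hX T))]
    simp only [Set.compl_ofPred, not_lt]
  simp_rw [hcompl]
  have hsub := ENNReal.Tendsto.sub tendsto_const_nhds h (Or.inl ENNReal.one_ne_top)
  rw [tsub_zero] at hsub
  exact (ENNReal.tendsto_toReal ENNReal.one_ne_top).comp hsub

end Concentration

end ProbabilityTheory

theorem stmt_1_general
    {Ω : Type} [MeasurableSpace Ω] (μ : Measure Ω) [IsProbabilityMeasure μ]
    (n : ℕ) (hn : 2 ≤ n) (σ2 : ℝ)
    (C : ℕ → Ω → ℝ) (hCmeas : ∀ t, Measurable (C t))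
    (hiid : iIndepFun C μ)
    (hlaw : ∀ t, Measure.map (fun ω => (n : ℝ) * C t ω) μ = chiSquared n)
    (sigma2hat : ℕ → Ω → ℝ)
    (h0 : ∀ ω, sigma2hat 0 ω = σ2)
    (hrec : ∀ t ω, sigma2hat (t + 1) ω = sigma2hat t ω * C (t + 1) ω) :
    ∀ ε : ℝ, 0 < ε →
      Tendsto (fun T : ℕ => (μ {ω | sigma2hat T ω ≤ ε}).toReal) atTop (nhds 1) := by
  intro ε hε
  have hn0 : (0 : ℝ) < n := Nat.cast_pos.mpr (by omega)
  have hmeas (T : ℕ) : Measurable (sigma2hat T) := by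
    have hprod (ω : Ω) := eq_mul_prod_range_of_succ (s := (sigma2hat · ω))
      (c := (C · ω)) (hrec · ω) T
    simp only [h0] at hprod
    rw [funext hprod]
    fun_prop
  have hsqrt (ω : Ω) (T : ℕ) : ENNReal.ofReal √|sigma2hat T ω|
      = ENNReal.ofReal √|σ2| * ∏ i ∈ range T, ENNReal.ofReal √|C (i + 1) ω| := by
    refine (h0 ω) ▸ eq_mul_prod_range_of_succ (s := fun t => ENNReal.ofReal √|sigma2hat t ω|)
      (c := fun t => ENNReal.ofReal √|C t ω|) (fun t => ?_) T
    rw [hrec, abs_mul, sqrt_mul (abs_nonneg _), ENNReal.ofReal_mul (sqrt_nonneg _)]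
  have hindep : iIndepFun (fun i ω => ENNReal.ofReal √|C (i + 1) ω|) μ :=
    (hiid.precomp Nat.succ_injective).comp (fun _ x => ENNReal.ofReal √|x|) fun _ => by fun_prop
  have hfactor (t : ℕ) : ∫⁻ ω, ENNReal.ofReal √|C t ω| ∂μ
      = ∫⁻ x, ENNReal.ofReal √(|x| / n) ∂chiSquared n := by
    rw [← hlaw t, lintegral_map (by fun_prop) (by fun_prop)]
    simp_rw [abs_mul, Nat.abs_cast, mul_div_cancel_left₀ _ hn0.ne']
  have hmoment (T : ℕ) : ∫⁻ ω, ENNReal.ofReal √|sigma2hat T ω| ∂μ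
      = ENNReal.ofReal √|σ2| * (∫⁻ x, ENNReal.ofReal √(|x| / n) ∂chiSquared n) ^ T := by
    simp_rw [hsqrt]
    rw [lintegral_const_mul _ (by fun_prop),
      lintegral_prod_eq_prod_lintegral_of_indepFun _ _ hindep fun _ => by fun_prop]
    simp [hfactor]
  exact tendsto_toReal_measure_le_of_tendsto_measure_lt hmeas <|
    tendsto_measure_lt_of_lintegral_sqrt_abs_le hmeas ENNReal.ofReal_ne_top
      (lintegral_sqrt_abs_div_chiSquared_lt_one hn0) (fun T => (hmoment T).le) hε

/-- In the recursive Gaussian variance estimation process with known mean,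
diversity vanishes: for every `n ≥ 2` and every `ε > 0`, `P(σ̂_T² ≤ ε) → 1` as `T → ∞`. -/
theorem stmt_1
    {Ω : Type} [MeasurableSpace Ω] (μ : Measure Ω) [IsProbabilityMeasure μ]
    (n : ℕ) (hn : 2 ≤ n) (σ2 : ℝ) (hσ2 : 0 < σ2)
    (C : ℕ → Ω → ℝ) (hCmeas : ∀ t, Measurable (C t))
    (hiid : iIndepFun C μ)
    (hlaw : ∀ t, Measure.map (fun ω => (n : ℝ) * C t ω) μ = chiSquared n)
    (sigma2hat : ℕ → Ω → ℝ)
    (h0 : ∀ ω, sigma2hat 0 ω = σ2)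
    (hrec : ∀ t ω, sigma2hat (t + 1) ω = sigma2hat t ω * C (t + 1) ω) :
    ∀ ε : ℝ, 0 < ε →
      Tendsto (fun T : ℕ => (μ {ω | sigma2hat T ω ≤ ε}).toReal) atTop (nhds 1) :=
  stmt_1_general μ n hn σ2 C hCmeas hiid hlaw sigma2hat h0 hrec
end

section
/- Let C_1, …, C_T be i.i.d. random variables with n·C_l distributed as chi-squared with n degrees of freedom, and let P_T = ∏_{l=1}^T C_l. Then for every n ≥ 2, T ≥ 1 and every ε > exp(−T/(3n)), one has P(P_T ≤ ε) ≥ 1 − 6 / ( n·T·( (log ε)/T + 1/(3n) )² ). -/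
/-!
A Chernoff bound. If `k · C ~ χ²(k)` then `C ~ Gamma(k/2, rate k/2)`, so
`E[C^s] = Γ(a + s) / (Γ(a) a^s)` with `a = k/2`, and Euler's limit formula for `Γ`, together with
the Taylor bounds `u - u²/2 ≤ log (1 + u) ≤ u - u²/2 + u³/3`, gives
`E[C^s] ≤ exp ((s² - s/6) / a)` for `a ≥ 1`, `s ≥ 0`. Markov's inequality for `∏ |C_l|^s` and
independence then give `P(P_T > ε) ≤ exp (-nTδ²/8)` with `δ = log ε / T + 1/(3n)` and
`s = nδ/4`, and `exp (-x) ≤ 3/(4x)` finishes.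
-/

open MeasureTheory ProbabilityTheory Filter

open Finset Real Topology
open scoped ENNReal

theorem le_of_hasDerivAt_le_of_nonneg {f g f' g' : ℝ → ℝ} (h0 : f 0 ≤ g 0)
    (hf : ∀ x, 0 ≤ x → HasDerivAt f (f' x) x) (hg : ∀ x, 0 ≤ x → HasDerivAt g (g' x) x)
    (hle : ∀ x, 0 < x → f' x ≤ g' x) {u : ℝ} (hu : 0 ≤ u) : f u ≤ g u := by
  have hderiv : ∀ x, 0 ≤ x → HasDerivAt (g - f) (g' x - f' x) x :=
    fun x hx => (hg x hx).sub (hf x hx)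
  have hmono : MonotoneOn (g - f) (Set.Ici 0) :=
    monotoneOn_of_hasDerivWithinAt_nonneg (convex_Ici 0)
      (fun x hx => (hderiv x hx).continuousAt.continuousWithinAt)
      (fun x hx => (hderiv x (interior_subset hx)).hasDerivWithinAt)
      (fun x hx => sub_nonneg.2 (hle x (by simpa using hx)))
  have h := hmono Set.self_mem_Ici hu hu
  simp only [Pi.sub_apply] at h
  linarith

theorem hasDerivAt_log_one_add {x : ℝ} (hx : 1 + x ≠ 0) :
    HasDerivAt (fun u => log (1 + u)) (1 + x)⁻¹ x := by
  simpa using ((hasDerivAt_id x).const_add 1).log hx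

theorem sub_sq_div_two_le_log_one_add {u : ℝ} (hu : 0 ≤ u) :
    u - u ^ 2 / 2 ≤ log (1 + u) := by
  refine le_of_hasDerivAt_le_of_nonneg (f := fun x => x - x ^ 2 / 2) (f' := fun x => 1 - x)
    (by simp) (fun x _ => ?_) (fun x _ => hasDerivAt_log_one_add (by positivity))
    (fun x hx => ?_) hu
  · exact ((hasDerivAt_id' x).fun_sub ((hasDerivAt_pow 2 x).div_const 2)).congr_deriv
      (by norm_num)
  · rw [← one_div, le_div_iff₀ (by positivity)]
    nlinarith

theorem log_one_add_le_sub_sq_div_two_add_cube_div_three {u : ℝ} (hu : 0 ≤ u) :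
    log (1 + u) ≤ u - u ^ 2 / 2 + u ^ 3 / 3 := by
  refine le_of_hasDerivAt_le_of_nonneg (g := fun x => x - x ^ 2 / 2 + x ^ 3 / 3)
    (g' := fun x => 1 - x + x ^ 2) (by simp)
    (fun x _ => hasDerivAt_log_one_add (by positivity)) (fun x _ => ?_) (fun x hx => ?_) hu
  · exact (((hasDerivAt_id' x).fun_sub ((hasDerivAt_pow 2 x).div_const 2)).fun_add
      ((hasDerivAt_pow 3 x).div_const 3)).congr_deriv (by norm_num)
  · rw [← one_div, div_le_iff₀ (by positivity)]
    nlinarith [pow_pos hx 3]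

theorem sum_range_inv_add_sq_le {a : ℝ} (ha : 1 / 2 < a) (N : ℕ) :
    ∑ j ∈ range N, (a + j)⁻¹ ^ 2 ≤ (a - 1 / 2)⁻¹ := by
  set g : ℕ → ℝ := fun j => (a + j - 1 / 2)⁻¹
  have hterm : ∀ j : ℕ, (a + j)⁻¹ ^ 2 ≤ g j - g (j + 1) := by
    intro j
    have hx : 1 / 2 < a + j := lt_add_of_lt_of_nonneg ha j.cast_nonneg
    have hg : g j - g (j + 1) = ((a + j) ^ 2 - 1 / 4)⁻¹ := by
      have h1 : a + j - 1 / 2 ≠ 0 := by linarith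
      have h2 : a + (j + 1) - 1 / 2 ≠ 0 := by linarith
      simp only [g, Nat.cast_succ]
      rw [inv_sub_inv h1 h2, show a + (j + 1) - 1 / 2 - (a + j - 1 / 2) = 1 by ring, one_div]
      ring_nf
    rw [hg, inv_pow]
    exact inv_anti₀ (by nlinarith) (by linarith)
  calc ∑ j ∈ range N, (a + j)⁻¹ ^ 2
      ≤ ∑ j ∈ range N, (g j - g (j + 1)) := sum_le_sum fun j _ => hterm j
    _ = g 0 - g N := sum_range_sub' g N
    _ ≤ (a - 1 / 2)⁻¹ := by
      have : 0 < g N := inv_pos.2 (by linarith [lt_add_of_lt_of_nonneg ha N.cast_nonneg])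
      simp only [g, Nat.cast_zero, add_zero] at this ⊢
      linarith

theorem inv_sub_inv_le_sum_range_inv_add_sq {a : ℝ} (ha : 0 < a) (N : ℕ) :
    a⁻¹ - (a + N)⁻¹ ≤ ∑ j ∈ range N, (a + j)⁻¹ ^ 2 := by
  set g : ℕ → ℝ := fun j => (a + j)⁻¹
  have hterm : ∀ j : ℕ, g j - g (j + 1) ≤ (a + j)⁻¹ ^ 2 := by
    intro j
    have hx : 0 < a + j := by positivity
    have hg : g j - g (j + 1) = ((a + j) * (a + j + 1))⁻¹ := by
      simp only [g, Nat.cast_succ]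
      rw [inv_sub_inv hx.ne' (by linarith), show a + (j + 1) - (a + j) = 1 by ring, one_div]
      ring_nf
    rw [hg, inv_pow]
    exact inv_anti₀ (by positivity) (by nlinarith)
  calc a⁻¹ - (a + N)⁻¹ = g 0 - g N := by simp [g]
    _ = ∑ j ∈ range N, (g j - g (j + 1)) := (sum_range_sub' g N).symm
    _ ≤ ∑ j ∈ range N, (a + j)⁻¹ ^ 2 := sum_le_sum fun j _ => hterm j

theorem mul_log_one_add_sub_log_one_add_mul_le {s v c : ℝ} (hs : 0 ≤ s) (hv : 0 ≤ v)
    (hvc : v ≤ c) :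
    s * log (1 + v) - log (1 + s * v) ≤ (s ^ 2 / 2 - (1 / 2 - c / 3) * s) * v ^ 2 := by
  have h1 := log_one_add_le_sub_sq_div_two_add_cube_div_three hv
  have h2 := sub_sq_div_two_le_log_one_add (mul_nonneg hs hv)
  nlinarith [mul_le_mul_of_nonneg_left h1 hs,
    mul_nonneg (mul_nonneg hs (sq_nonneg v)) (sub_nonneg.2 hvc)]

theorem sum_range_mul_log_one_add_inv_sub_le {a s : ℝ} (ha : 1 ≤ a) (hs : 0 ≤ s) (N : ℕ) :
    ∑ j ∈ range N, (s * log (1 + (a + j)⁻¹) - log (1 + s * (a + j)⁻¹))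
      ≤ (s ^ 2 - s / 6) / a + s / (a + N) := by
  have ha₀ : 0 < a := by linarith
  have hinv : a⁻¹ ≤ 1 := inv_le_one_of_one_le₀ ha
  set S := ∑ j ∈ range N, (a + j)⁻¹ ^ 2
  have hS_le : S ≤ 2 * a⁻¹ := by
    refine (sum_range_inv_add_sq_le (by linarith) N).trans ?_
    rw [inv_le_comm₀ (by linarith) (by positivity), mul_inv, inv_inv]
    linarith
  have hS_ge : a⁻¹ - (a + N)⁻¹ ≤ S := inv_sub_inv_le_sum_range_inv_add_sq ha₀ N
  have hcoef : 0 ≤ (1 / 2 - a⁻¹ / 3) * s := mul_nonneg (by linarith) hs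
  calc ∑ j ∈ range N, (s * log (1 + (a + j)⁻¹) - log (1 + s * (a + j)⁻¹))
      ≤ ∑ j ∈ range N, (s ^ 2 / 2 - (1 / 2 - a⁻¹ / 3) * s) * (a + j)⁻¹ ^ 2 :=
        sum_le_sum fun j _ => mul_log_one_add_sub_log_one_add_mul_le hs (by positivity)
          (inv_anti₀ ha₀ (le_add_of_nonneg_right j.cast_nonneg))
    _ = s ^ 2 / 2 * S - (1 / 2 - a⁻¹ / 3) * s * S := by rw [← mul_sum]; ring
    _ ≤ s ^ 2 / 2 * (2 * a⁻¹) - (1 / 2 - a⁻¹ / 3) * s * (a⁻¹ - (a + N)⁻¹) := by gcongr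
    _ ≤ (s ^ 2 - s / 6) / a + s / (a + N) := by
      have hc : 0 ≤ (a + N)⁻¹ := by positivity
      have hsa : 0 ≤ s * a⁻¹ := by positivity
      rw [div_eq_mul_inv _ a, div_eq_mul_inv s (a + N)]
      nlinarith [mul_nonneg hsa (sub_nonneg.2 hinv), mul_nonneg hs hc, mul_nonneg hsa hc]

theorem log_GammaSeq_add_div_GammaSeq_le {a s : ℝ} (ha : 0 < a) (hs : 0 ≤ s) {N : ℕ}
    (hN : 0 < N) :
    log (GammaSeq (a + s) N / GammaSeq a N)
      ≤ s * log a
        + ∑ j ∈ range N, (s * log (1 + (a + j)⁻¹) - log (1 + s * (a + j)⁻¹)) := by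
  have hN₀ : (0 : ℝ) < N := Nat.cast_pos.2 hN
  have hx : ∀ j : ℕ, 0 < a + j := fun j => by positivity
  have hxs : ∀ j : ℕ, 0 < a + s + j := fun j => by positivity
  have hratio : GammaSeq (a + s) N / GammaSeq a N
      = (N : ℝ) ^ s * ∏ j ∈ range (N + 1), ((a + j) / (a + s + j)) := by
    have hprod := prod_pos fun j (_ : j ∈ range (N + 1)) => hx j
    have hprod_s := prod_pos fun j (_ : j ∈ range (N + 1)) => hxs j
    rw [GammaSeq, GammaSeq, prod_div_distrib, rpow_add hN₀]
    field_simp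
  have hlog_ratio : log (GammaSeq (a + s) N / GammaSeq a N)
      = s * log N + ∑ j ∈ range N, log ((a + j) / (a + s + j))
        + log ((a + N) / (a + s + N)) := by
    rw [hratio, log_mul (by positivity) (prod_pos fun j _ => (div_pos (hx j) (hxs j))).ne',
      log_rpow hN₀, log_prod fun j _ => (div_pos (hx j) (hxs j)).ne', sum_range_succ]
    ring
  have hlog_N : s * log N ≤ s * log (a + N) :=
    mul_le_mul_of_nonneg_left (log_le_log hN₀ (by linarith)) hs
  have hlast : log ((a + N) / (a + s + N)) ≤ 0 :=
    log_nonpos (div_pos (hx N) (hxs N)).le ((div_le_one (hxs N)).2 (by linarith))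
  have hfactor : ∀ j : ℕ, log ((a + j) / (a + s + j)) = -log (1 + s * (a + j)⁻¹) := by
    intro j
    rw [← log_inv]
    congr 1
    field_simp
    ring
  have htelescope : log (a + N) = log a + ∑ j ∈ range N, log (1 + (a + j)⁻¹) := by
    have hstep : ∀ j : ℕ, log (1 + (a + j)⁻¹) = log (a + (j + 1 : ℕ)) - log (a + j) := by
      intro j
      rw [← log_div (by positivity) (hx j).ne']
      congr 1
      field_simp
      push_cast
      ring
    rw [sum_congr rfl fun j _ => hstep j, sum_range_sub (fun j => log (a + j))]
    simp
  rw [hlog_ratio, sum_congr rfl fun j _ => hfactor j, sum_sub_distrib, ← mul_sum, sum_neg_distrib]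
  nlinarith [htelescope]

theorem log_Gamma_add_div_Gamma_le {a s : ℝ} (ha : 1 ≤ a) (hs : 0 ≤ s) :
    log (Gamma (a + s) / Gamma a) ≤ s * log a + (s ^ 2 - s / 6) / a := by
  have ha₀ : 0 < a := by linarith
  have hlim_ratio : Tendsto (fun N : ℕ => log (GammaSeq (a + s) N / GammaSeq a N)) atTop
      (𝓝 (log (Gamma (a + s) / Gamma a))) :=
    ((GammaSeq_tendsto_Gamma (a + s)).div (GammaSeq_tendsto_Gamma a)
      (Gamma_pos_of_pos ha₀).ne').log
      (div_pos (Gamma_pos_of_pos (by linarith)) (Gamma_pos_of_pos ha₀)).ne'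
  have hlim_bound : Tendsto (fun N : ℕ => s * log a + ((s ^ 2 - s / 6) / a + s / (a + N)))
      atTop (𝓝 (s * log a + ((s ^ 2 - s / 6) / a + 0))) :=
    tendsto_const_nhds.add (tendsto_const_nhds.add (tendsto_const_nhds.div_atTop
      (tendsto_atTop_add_const_left _ a tendsto_natCast_atTop_atTop)))
  rw [← add_zero ((s ^ 2 - s / 6) / a)]
  refine le_of_tendsto_of_tendsto hlim_ratio hlim_bound ?_
  filter_upwards [eventually_gt_atTop 0] with N hN
  exact (log_GammaSeq_add_div_GammaSeq_le ha₀ hs hN).trans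
    ((add_le_add_iff_left _).2 (sum_range_mul_log_one_add_inv_sub_le ha hs N))

theorem Gamma_add_div_Gamma_mul_rpow_le {a s : ℝ} (ha : 1 ≤ a) (hs : 0 ≤ s) :
    Gamma (a + s) / (Gamma a * a ^ s) ≤ exp ((s ^ 2 - s / 6) / a) := by
  have ha₀ : 0 < a := by linarith
  have hpos : 0 < Gamma (a + s) / Gamma a :=
    div_pos (Gamma_pos_of_pos (by linarith)) (Gamma_pos_of_pos ha₀)
  rw [← div_div, ← exp_log hpos, rpow_def_of_pos ha₀, ← exp_sub, exp_le_exp]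
  linarith [log_Gamma_add_div_Gamma_le ha hs]

theorem exp_neg_le_three_div_four_mul {x : ℝ} (hx : 0 < x) : exp (-x) ≤ 3 / (4 * x) := by
  rw [exp_neg, inv_le_comm₀ (exp_pos x) (by positivity), inv_div]
  nlinarith [quadratic_le_exp_of_nonneg hx.le]

section

variable {Ω : Type*} [MeasurableSpace Ω] {μ : Measure Ω}

theorem lintegral_abs_rpow_gammaMeasure {a r s : ℝ} (ha : 0 < a) (hr : 0 < r) (has : 0 < a + s) :
    ∫⁻ x, ENNReal.ofReal (|x| ^ s) ∂gammaMeasure a r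
      = ENNReal.ofReal (Gamma (a + s) / (Gamma a * r ^ s)) := by
  have hΓa := Gamma_pos_of_pos ha
  have hΓas := Gamma_pos_of_pos has
  have hdensity : (gammaPDF a r * fun x => ENNReal.ofReal (|x| ^ s))
      =ᵐ[volume]
        fun x => ENNReal.ofReal (Gamma (a + s) / (Gamma a * r ^ s)) * gammaPDF (a + s) r x := by
    filter_upwards [volume.ae_ne 0] with x hx
    rcases hx.lt_or_gt with hneg | hpos
    · simp [gammaPDF_of_neg hneg]
    · have hrs : 0 < r ^ s := rpow_pos_of_pos hr s
      rw [Pi.mul_apply, gammaPDF_of_nonneg hpos.le, gammaPDF_of_nonneg hpos.le, abs_of_pos hpos,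
        ← ENNReal.ofReal_mul (by positivity), ← ENNReal.ofReal_mul (by positivity),
        rpow_add hr, show a + s - 1 = a - 1 + s by ring, rpow_add hpos]
      congr 1
      field_simp
  have hpdf : ∀ b, Measurable (gammaPDF b r) := fun b =>
    (measurable_gammaPDFReal b r).ennreal_ofReal
  rw [gammaMeasure, lintegral_withDensity_eq_lintegral_mul _ (hpdf a) (by fun_prop),
    lintegral_congr_ae hdensity,
    lintegral_const_mul _ (hpdf (a + s)),
    lintegral_gammaPDF_eq_one has hr, mul_one]

theorem lintegral_abs_rpow_eq_mul_lintegral_map_const_mul {X : Ω → ℝ} (hX : Measurable X)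
    {b : ℝ} (hb : 0 < b) (s : ℝ) :
    ∫⁻ ω, ENNReal.ofReal (|X ω| ^ s) ∂μ
      = ENNReal.ofReal ((b ^ s)⁻¹)
        * ∫⁻ x, ENNReal.ofReal (|x| ^ s) ∂μ.map (fun ω => b * X ω) := by
  have hbs : 0 < b ^ s := rpow_pos_of_pos hb s
  rw [lintegral_map (by fun_prop) (by fun_prop), ← lintegral_const_mul _ (by fun_prop)]
  congr with ω
  rw [← ENNReal.ofReal_mul (by positivity), abs_mul, abs_of_pos hb,
    mul_rpow hb.le (abs_nonneg _), inv_mul_cancel_left₀ hbs.ne']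

theorem lintegral_abs_rpow_le_of_map_const_mul_eq_chiSquared {X : Ω → ℝ} (hX : Measurable X)
    {k s : ℝ} (hk : 2 ≤ k) (hs : 0 ≤ s) (hlaw : μ.map (fun ω => k * X ω) = chiSquared k) :
    ∫⁻ ω, ENNReal.ofReal (|X ω| ^ s) ∂μ
      ≤ ENNReal.ofReal (exp ((s ^ 2 - s / 6) / (k / 2))) := by
  have hk₀ : 0 < k := by linarith
  rw [lintegral_abs_rpow_eq_mul_lintegral_map_const_mul hX hk₀ s, hlaw, chiSquared,
    lintegral_abs_rpow_gammaMeasure (by positivity) one_half_pos (by positivity),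
    ← ENNReal.ofReal_mul (by positivity)]
  refine ENNReal.ofReal_le_ofReal (le_of_eq_of_le ?_ (Gamma_add_div_Gamma_mul_rpow_le
    (by linarith) hs))
  rw [div_rpow hk₀.le two_pos.le, div_rpow one_pos.le two_pos.le, one_rpow]
  field_simp

theorem measureReal_lt_prod_le {ι : Type*} [Fintype ι] {X : ι → Ω → ℝ}
    (hX : ∀ i, Measurable (X i)) (hind : iIndepFun X μ) {ε s M : ℝ} (hε : 0 < ε)
    (hs : 0 ≤ s) (hM : 0 ≤ M)
    (hmoment : ∀ i, ∫⁻ ω, ENNReal.ofReal (|X i ω| ^ s) ∂μ ≤ ENNReal.ofReal M) :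
    μ.real {ω | ε < ∏ i, X i ω} ≤ M ^ Fintype.card ι / ε ^ s := by
  set g : ι → Ω → ℝ≥0∞ := fun i ω => ENNReal.ofReal (|X i ω| ^ s)
  have hg : ∀ i, Measurable (g i) := fun i => by fun_prop
  have hg_indep : iIndepFun g μ :=
    hind.comp (fun _ x => ENNReal.ofReal (|x| ^ s)) fun _ => by fun_prop
  have hεs : 0 < ε ^ s := rpow_pos_of_pos hε s
  have hsub : {ω | ε < ∏ i, X i ω} ⊆ {ω | ENNReal.ofReal (ε ^ s) ≤ ∏ i, g i ω} := by
    intro ω hω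
    have hε_le : ε ≤ ∏ i, |X i ω| := hω.le.trans ((le_abs_self _).trans (abs_prod _ _).le)
    calc ENNReal.ofReal (ε ^ s)
        ≤ ENNReal.ofReal (∏ i, |X i ω| ^ s) := by
          rw [finsetProd_rpow _ _ fun i _ => abs_nonneg _]
          exact ENNReal.ofReal_le_ofReal (rpow_le_rpow hε.le hε_le hs)
      _ = ∏ i, g i ω := ENNReal.ofReal_prod_of_nonneg fun i _ => by positivity
  have hmarkov : μ {ω | ε < ∏ i, X i ω} ≤ ENNReal.ofReal (M ^ Fintype.card ι / ε ^ s) :=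
    calc μ {ω | ε < ∏ i, X i ω}
        ≤ (∫⁻ ω, ∏ i, g i ω ∂μ) / ENNReal.ofReal (ε ^ s) :=
          (measure_mono hsub).trans (meas_ge_le_lintegral_div (by fun_prop)
            (ENNReal.ofReal_pos.2 hεs).ne' ENNReal.ofReal_ne_top)
      _ = (∏ i, ∫⁻ ω, g i ω ∂μ) / ENNReal.ofReal (ε ^ s) := by
          rw [lintegral_prod_eq_prod_lintegral_of_indepFun _ g hg_indep hg]
      _ ≤ ENNReal.ofReal M ^ Fintype.card ι / ENNReal.ofReal (ε ^ s) := by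
          gcongr
          simpa using prod_le_pow_card univ _ _ fun i _ => hmoment i
      _ = ENNReal.ofReal (M ^ Fintype.card ι / ε ^ s) := by
          rw [ENNReal.ofReal_div_of_pos hεs, ENNReal.ofReal_pow hM]
  exact ENNReal.toReal_le_of_le_ofReal (by positivity) hmarkov

theorem measureReal_lt_prod_le_of_map_const_mul_eq_chiSquared {ι : Type*} [Fintype ι]
    [Nonempty ι] {X : ι → Ω → ℝ} (hX : ∀ i, Measurable (X i)) (hind : iIndepFun X μ)
    {k : ℝ} (hk : 2 ≤ k) (hlaw : ∀ i, μ.map (fun ω => k * X i ω) = chiSquared k)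
    {ε δ : ℝ} (hε : 0 < ε) (hδ : 0 < δ)
    (hlog : log ε = Fintype.card ι * (δ - 1 / (3 * k))) :
    μ.real {ω | ε < ∏ i, X i ω} ≤ 6 / (k * Fintype.card ι * δ ^ 2) := by
  have hk₀ : 0 < k := by linarith
  have hcard : (0 : ℝ) < Fintype.card ι := Nat.cast_pos.2 Fintype.card_pos
  -- `s = kδ/4` minimises the Chernoff exponent, which equals `|ι| (2s²/k - sδ)`
  set s := k * δ / 4
  have htail := measureReal_lt_prod_le (s := s) hX hind hε (by positivity) (exp_pos _).le
    fun i => lintegral_abs_rpow_le_of_map_const_mul_eq_chiSquared (hX i) hk (by positivity)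
      (hlaw i)
  have hexponent : exp ((s ^ 2 - s / 6) / (k / 2)) ^ Fintype.card ι / ε ^ s
      = exp (-(k * Fintype.card ι * δ ^ 2 / 8)) := by
    rw [← exp_nat_mul, rpow_def_of_pos hε, ← exp_sub, hlog]
    congr 1
    field_simp
    ring
  have hexp_le :
      exp (-(k * Fintype.card ι * δ ^ 2 / 8)) ≤ 6 / (k * Fintype.card ι * δ ^ 2) := by
    refine (exp_neg_le_three_div_four_mul (by positivity)).trans_eq ?_
    field_simp
    ring
  linarith

end

/-- If `C_1, …, C_T` are i.i.d. with `n · C_l ~ χ²(n)` and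
`P_T = ∏_{l=1}^T C_l`, then for every `n ≥ 2`, `T ≥ 1` and every `ε > exp(−T/(3n))`,
`P(P_T ≤ ε) ≥ 1 − 6 / (n T ((log ε)/T + 1/(3n))²)`. -/
theorem stmt_2
    {Ω : Type} [MeasurableSpace Ω] (μ : Measure Ω) [IsProbabilityMeasure μ]
    (n T : ℕ) (hn : 2 ≤ n) (hT : 1 ≤ T)
    (C : Fin T → Ω → ℝ) (hmeas : ∀ l, Measurable (C l))
    (hindep : iIndepFun C μ)
    (hlaw : ∀ l, Measure.map (fun ω => (n : ℝ) * C l ω) μ = chiSquared n)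
    (ε : ℝ) (hε : Real.exp (-(T : ℝ) / (3 * n)) < ε) :
    1 - 6 / ((n : ℝ) * T * (Real.log ε / T + 1 / (3 * n)) ^ 2)
      ≤ (μ {ω | ∏ l, C l ω ≤ ε}).toReal := by
  have hT₀ : (0 : ℝ) < T := Nat.cast_pos.2 hT
  have hε₀ : 0 < ε := (exp_pos _).trans hε
  set δ := log ε / T + 1 / (3 * n) with hδ_def
  have hlog_ε : log ε = T * (δ - 1 / (3 * n)) := by
    rw [hδ_def]
    field_simp
    ring
  have hδ : 0 < δ := by
    have := (lt_log_iff_exp_lt hε₀).2 hε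
    rw [hlog_ε, mul_sub, mul_one_div, neg_div] at this
    exact pos_of_mul_pos_right (by linarith) hT₀.le
  have : Nonempty (Fin T) := ⟨⟨0, hT⟩⟩
  have htail := measureReal_lt_prod_le_of_map_const_mul_eq_chiSquared hmeas hindep
    (by exact_mod_cast hn) hlaw hε₀ hδ (by rwa [Fintype.card_fin])
  rw [Fintype.card_fin] at htail
  have hcompl : {ω | ∏ l, C l ω ≤ ε} = {ω | ε < ∏ l, C l ω}ᶜ := by
    ext ω
    simp
  rw [← measureReal_def, hcompl,
    probReal_compl_eq_one_sub (measurableSet_lt measurable_const (by fun_prop))]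
  linarith
end

section
/- For each integer n ≥ 1, consider a recursive estimation process (θ̂_t^{(n)})_{t≥0} with θ̂_0^{(n)} = θ* and per-step conditional tail bound with rate function r(m) = m^κ for some κ > 0 and sample sizes n_0 = n, n_t = c_t·n, where the schedule satisfies a₁·t^{γ(1+s)/κ} ≤ c_t ≤ a₂·t^{γ(1+s)/κ} for some constants a₁, a₂ > 0 and s > 0. Then for every δ > 0, lim_{n→∞} limsup_{T→∞} P(‖θ̂_T^{(n)} − θ*‖₂ ≥ δ) = 0. -/
open MeasureTheory ProbabilityTheory Filter

/-- The Euclidean (`ℓ²`) norm of a vector in `ℝ^p`. -/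
noncomputable def l2norm {p : ℕ} (x : Fin p → ℝ) : ℝ := Real.sqrt (∑ i, (x i) ^ 2)

/-! Split the distance `δ` into step budgets `δₜ = A t ^ (-(1 + s / 2))` with `∑ δₜ < δ`: if no
increment exceeds its budget, the estimate stays within `δ` of `θ*`, so a union bound over the steps
bounds the probability uniformly in `T`. The growth of the schedule makes the `t`-th tail exponent
at least `B n ^ κ t ^ (γ s / 2)`, and `∑ₜ exp (-B n ^ κ t ^ (γ s / 2)) → 0` as `n → ∞` by dominated
convergence. -/

open Finset Topology

lemma l2norm_eq_norm {p : ℕ} (x : Fin p → ℝ) : l2norm x = ‖WithLp.toLp 2 x‖ := by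
  simp [l2norm, EuclideanSpace.norm_eq, Real.norm_eq_abs, sq_abs]

lemma l2norm_sum_le {p : ℕ} (s : Finset ℕ) (f : ℕ → Fin p → ℝ) :
    l2norm (∑ i ∈ s, f i) ≤ ∑ i ∈ s, l2norm (f i) := by
  simpa only [l2norm_eq_norm, WithLp.toLp_sum] using norm_sum_le s fun i ↦ WithLp.toLp 2 (f i)

lemma continuous_l2norm {p : ℕ} : Continuous (l2norm (p := p)) := by
  unfold l2norm; fun_prop

lemma summable_exp_neg_mul_rpow {B e : ℝ} (hB : 0 < B) (he : 0 < e) :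
    Summable fun t : ℕ ↦ Real.exp (-(B * (t : ℝ) ^ e)) := by
  have h := (isLittleO_exp_neg_mul_rpow_atTop hB (-2 / e)).comp_tendsto
    ((tendsto_rpow_atTop he).comp tendsto_natCast_atTop_atTop)
  refine summable_of_isBigO_nat (Real.summable_nat_rpow.mpr (by norm_num : (-2 : ℝ) < -1)) ?_
  refine (h.isBigO.congr_left fun t ↦ by simp).congr_right fun t ↦ ?_
  simp only [Function.comp_apply, ← Real.rpow_mul (Nat.cast_nonneg t)]
  congr 1; field_simp

lemma summable_exp_neg_mul_succ_rpow {B e : ℝ} (hB : 0 < B) (he : 0 < e) :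
    Summable fun i : ℕ ↦ Real.exp (-(B * ((i : ℝ) + 1) ^ e)) := by
  simpa using (summable_nat_add_iff 1).mpr (summable_exp_neg_mul_rpow hB he)

lemma tendsto_tsum_exp_neg_mul_rpow {e : ℝ} (he : 0 < e) :
    Tendsto (fun x : ℝ ↦ ∑' i : ℕ, Real.exp (-(x * ((i : ℝ) + 1) ^ e))) atTop (𝓝 0) := by
  have hlim := tendsto_tsum_of_dominated_convergence (𝓕 := atTop)
    (f := fun (x : ℝ) (i : ℕ) ↦ Real.exp (-(x * ((i : ℝ) + 1) ^ e))) (g := fun _ ↦ 0)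
    (summable_exp_neg_mul_succ_rpow one_pos he)
    (fun i ↦ Real.tendsto_exp_atBot.comp <| tendsto_neg_atTop_atBot.comp <|
      tendsto_id.atTop_mul_const (by positivity))
    (eventually_ge_atTop 1 |>.mono fun x hx i ↦ by
      rw [Real.norm_of_nonneg (Real.exp_pos _).le, Real.exp_le_exp, neg_le_neg_iff]
      exact mul_le_mul_of_nonneg_right hx (by positivity))
  simpa using hlim

lemma exists_pos_mul_sum_lt {f : ℕ → ℝ} (hf : Summable f) (hf0 : ∀ i, 0 ≤ f i) {δ : ℝ}
    (hδ : 0 < δ) : ∃ A > 0, ∀ T, ∑ i ∈ range T, A * f i < δ := by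
  have htsum : 0 ≤ ∑' i, f i := tsum_nonneg hf0
  refine ⟨δ / (∑' i, f i + 1), by positivity, fun T ↦ ?_⟩
  calc ∑ i ∈ range T, δ / (∑' i, f i + 1) * f i
      = δ / (∑' i, f i + 1) * ∑ i ∈ range T, f i := (mul_sum ..).symm
    _ ≤ δ / (∑' i, f i + 1) * ∑' i, f i := by
      gcongr; exact hf.sum_le_tsum _ fun i _ ↦ hf0 i
    _ < δ / (∑' i, f i + 1) * (∑' i, f i + 1) := by gcongr; linarith
    _ = δ := div_mul_cancel₀ _ (by positivity)

lemma exists_pos_mul_succ_rpow_le_rpow {c : ℕ → ℝ} {a₁ κ q : ℝ} (ha₁ : 0 < a₁) (hκ : 0 < κ)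
    (hq : 0 ≤ q) (hc0 : 0 < c 0) (hc : ∀ t : ℕ, 1 ≤ t → a₁ * (t : ℝ) ^ (q / κ) ≤ c t) :
    ∃ a > 0, ∀ i : ℕ, a * ((i : ℝ) + 1) ^ q ≤ c i ^ κ := by
  refine ⟨min (c 0 ^ κ) (a₁ ^ κ * 2 ^ (-q)), by positivity, fun i ↦ ?_⟩
  rcases i.eq_zero_or_pos with rfl | hi
  · simp
  have hi1 : (1 : ℝ) ≤ i := by exact_mod_cast hi
  calc min (c 0 ^ κ) (a₁ ^ κ * 2 ^ (-q)) * ((i : ℝ) + 1) ^ q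
      ≤ a₁ ^ κ * 2 ^ (-q) * ((i : ℝ) + 1) ^ q := by gcongr; exact min_le_right _ _
    _ = a₁ ^ κ * (((i : ℝ) + 1) / 2) ^ q := by
      rw [Real.div_rpow (by positivity) zero_le_two, Real.rpow_neg zero_le_two]; ring
    _ ≤ a₁ ^ κ * (i : ℝ) ^ q := by gcongr; linarith
    _ = (a₁ * (i : ℝ) ^ (q / κ)) ^ κ := by
      rw [Real.mul_rpow ha₁.le (by positivity), ← Real.rpow_mul (by positivity),
        div_mul_cancel₀ _ hκ.ne']
    _ ≤ c i ^ κ := by gcongr; exact hc i hi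

lemma le_mul_rpow_mul_rpow_of_mul_rpow_le {a A γ κ s x y n : ℝ} (hA : 0 ≤ A) (hx : 0 < x)
    (hy : 0 ≤ y) (hn : 0 ≤ n) (hxy : a * x ^ (γ * (1 + s)) ≤ y ^ κ) :
    a * A ^ γ * n ^ κ * x ^ (γ * s / 2) ≤ (y * n) ^ κ * (A * x ^ (-(1 + s / 2))) ^ γ := by
  have hsplit : x ^ (γ * s / 2) = x ^ (γ * (1 + s)) * x ^ (-(1 + s / 2) * γ) := by
    rw [← Real.rpow_add hx]; ring_nf
  rw [Real.mul_rpow hy hn, Real.mul_rpow hA (by positivity), ← Real.rpow_mul hx.le, hsplit]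
  calc a * A ^ γ * n ^ κ * (x ^ (γ * (1 + s)) * x ^ (-(1 + s / 2) * γ))
      = a * x ^ (γ * (1 + s)) * n ^ κ * A ^ γ * x ^ (-(1 + s / 2) * γ) := by ring
    _ ≤ y ^ κ * n ^ κ * A ^ γ * x ^ (-(1 + s / 2) * γ) := by gcongr
    _ = y ^ κ * n ^ κ * (A ^ γ * x ^ (-(1 + s / 2) * γ)) := by ring

section IncrementBounds

variable {Ω : Type*} [mΩ : MeasurableSpace Ω] {μ : Measure Ω}

lemma measure_toReal_le_of_condExp_indicator_le [IsProbabilityMeasure μ] {m : MeasurableSpace Ω}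
    (hm : m ≤ mΩ) [SigmaFinite (μ.trim hm)] {A : Set Ω} (hA : MeasurableSet[mΩ] A)
    {b : ℝ} (h : ∀ᵐ ω ∂μ, (μ[A.indicator (fun _ ↦ (1 : ℝ)) | m]) ω ≤ b) :
    (μ A).toReal ≤ b :=
  calc (μ A).toReal = ∫ ω, A.indicator 1 ω ∂μ := (integral_indicator_one hA).symm
    _ = ∫ ω, (μ[A.indicator (fun _ ↦ (1 : ℝ)) | m]) ω ∂μ := (integral_condExp hm).symm
    _ ≤ ∫ _, b ∂μ := integral_mono_ae integrable_condExp (integrable_const b) h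
    _ = b := by simp

variable {p : ℕ} {X : ℕ → Ω → Fin p → ℝ} {x₀ : Fin p → ℝ}

lemma measure_increment_gt_toReal_le_of_condExp_le [IsProbabilityMeasure μ]
    {F : Filtration ℕ mΩ} (hX : Adapted F X) (i : ℕ) {d b : ℝ}
    (h : ∀ᵐ ω ∂μ,
      (μ[{ω | d < l2norm (X (i + 1) ω - X i ω)}.indicator (fun _ ↦ (1 : ℝ)) | F i]) ω ≤ b) :
    (μ {ω | d < l2norm (X (i + 1) ω - X i ω)}).toReal ≤ b := by
  have hmeas (t : ℕ) : Measurable (X t) := (hX t).mono (F.le t) le_rfl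
  refine measure_toReal_le_of_condExp_indicator_le (F.le i) ?_ h
  exact measurableSet_lt measurable_const
    (continuous_l2norm.measurable.comp ((hmeas _).sub (hmeas _)))

lemma measure_dist_ge_le_sum_measure_increment_gt (h0 : ∀ᵐ ω ∂μ, X 0 ω = x₀) {d : ℕ → ℝ}
    {δ : ℝ} {T : ℕ} (hd : ∑ i ∈ range T, d i < δ) :
    μ {ω | δ ≤ l2norm (X T ω - x₀)} ≤
      ∑ i ∈ range T, μ {ω | d i < l2norm (X (i + 1) ω - X i ω)} := by
  refine (measure_mono_ae ?_).trans (measure_biUnion_finset_le _ _)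
  filter_upwards [h0] with ω hω (hfar : δ ≤ l2norm (X T ω - x₀))
  change ω ∈ ⋃ i ∈ range T, {ω | d i < l2norm (X (i + 1) ω - X i ω)}
  simp only [Set.mem_iUnion, Set.mem_ofPred_eq, exists_prop]
  by_contra! hnear
  have htelescope : ∑ i ∈ range T, (X (i + 1) ω - X i ω) = X T ω - x₀ := by
    rw [sum_range_sub (X · ω), hω]
  have : l2norm (X T ω - x₀) ≤ ∑ i ∈ range T, d i :=
    htelescope ▸ (l2norm_sum_le _ _).trans (sum_le_sum hnear)
  linarith

lemma measure_dist_ge_toReal_le_tsum [IsFiniteMeasure μ] (h0 : ∀ᵐ ω ∂μ, X 0 ω = x₀)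
    {d b : ℕ → ℝ} {δ : ℝ} (hd : ∀ T, ∑ i ∈ range T, d i < δ) (hb : Summable b)
    (hstep : ∀ i, (μ {ω | d i < l2norm (X (i + 1) ω - X i ω)}).toReal ≤ b i) (T : ℕ) :
    (μ {ω | δ ≤ l2norm (X T ω - x₀)}).toReal ≤ ∑' i, b i := by
  have hb0 : ∀ i, 0 ≤ b i := fun i ↦ ENNReal.toReal_nonneg.trans (hstep i)
  calc (μ {ω | δ ≤ l2norm (X T ω - x₀)}).toReal
      ≤ ∑ i ∈ range T, (μ {ω | d i < l2norm (X (i + 1) ω - X i ω)}).toReal := by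
        rw [← ENNReal.toReal_sum fun i _ ↦ measure_ne_top μ _]
        exact ENNReal.toReal_mono (ENNReal.sum_ne_top.mpr fun i _ ↦ measure_ne_top μ _)
          (measure_dist_ge_le_sum_measure_increment_gt h0 (hd T))
    _ ≤ ∑ i ∈ range T, b i := sum_le_sum fun i _ ↦ hstep i
    _ ≤ ∑' i, b i := hb.sum_le_tsum _ fun i _ ↦ hb0 i

end IncrementBounds

lemma tendsto_limsup_zero_of_nonneg_of_le {u : ℕ → ℕ → ℝ} {b : ℕ → ℝ} (hu0 : ∀ n T, 0 ≤ u n T)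
    (hub : ∀ᶠ n in atTop, ∀ T, u n T ≤ b n) (hb : Tendsto b atTop (𝓝 0)) :
    Tendsto (fun n ↦ limsup (u n) atTop) atTop (𝓝 0) := by
  refine tendsto_of_tendsto_of_tendsto_of_le_of_le' tendsto_const_nhds hb ?_ ?_ <;>
    filter_upwards [hub] with n hn
  · exact le_limsup_of_frequently_le (.of_forall (hu0 n)) (isBoundedUnder_of ⟨b n, hn⟩)
  · exact limsup_le_of_le (isCoboundedUnder_le_of_le atTop (hu0 n)) (.of_forall hn)

theorem stmt_4_general
    {Ω : Type} [mΩ : MeasurableSpace Ω] (μ : Measure Ω) [IsProbabilityMeasure μ]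
    (p : ℕ) (θstar : Fin p → ℝ)
    (C₁ C₂ γ κ s a₁ a₂ : ℝ) (hC₁ : 0 < C₁) (hC₂ : 0 < C₂) (hγ : 0 < γ) (hκ : 0 < κ)
    (hs : 0 < s) (ha₁ : 0 < a₁)
    (c : ℕ → ℝ) (hcpos : ∀ t, 0 < c t)
    (hcsched : ∀ t : ℕ, 1 ≤ t →
      a₁ * (t : ℝ) ^ (γ * (1 + s) / κ) ≤ c t ∧ c t ≤ a₂ * (t : ℝ) ^ (γ * (1 + s) / κ))
    (F : ℕ → Filtration ℕ mΩ)
    (θhat : ℕ → ℕ → Ω → (Fin p → ℝ))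
    (hadapt : ∀ n, Adapted (F n) (θhat n))
    (h0 : ∀ n, ∀ᵐ ω ∂μ, θhat n 0 ω = θstar)
    (htail : ∀ n : ℕ, 1 ≤ n → ∀ t : ℕ, 1 ≤ t → ∀ δ' : ℝ, 0 < δ' →
      ∀ᵐ ω ∂μ,
        (μ[Set.indicator {ω' | δ' < l2norm (θhat n t ω' - θhat n (t - 1) ω')}
            (fun _ => (1 : ℝ)) | (F n) (t - 1)]) ω
          ≤ C₁ * Real.exp (-C₂ * (c (t - 1) * n) ^ κ * δ' ^ γ)) :
    ∀ δ : ℝ, 0 < δ →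
      Tendsto (fun n : ℕ =>
          limsup (fun T : ℕ => (μ {ω | δ ≤ l2norm (θhat n T ω - θstar)}).toReal) atTop)
        atTop (nhds 0) := by
  intro δ hδ
  obtain ⟨a, ha, hc_lower⟩ := exists_pos_mul_succ_rpow_le_rpow ha₁ hκ (by positivity) (hcpos 0)
    fun t ht ↦ (hcsched t ht).1
  have hbudget_summable : Summable fun i : ℕ ↦ ((i : ℝ) + 1) ^ (-(1 + s / 2)) := by
    simpa using (summable_nat_add_iff 1).mpr (Real.summable_nat_rpow.mpr (by linarith))
  obtain ⟨A, hA, hbudget⟩ := exists_pos_mul_sum_lt hbudget_summable (fun i ↦ by positivity) hδ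
  set B := C₂ * a * A ^ γ
  have hstep (n : ℕ) (hn : 1 ≤ n) (i : ℕ) :
      (μ {ω | A * ((i : ℝ) + 1) ^ (-(1 + s / 2)) < l2norm (θhat n (i + 1) ω - θhat n i ω)}).toReal
        ≤ C₁ * Real.exp (-(B * n ^ κ * ((i : ℝ) + 1) ^ (γ * s / 2))) := by
    have htail_i := htail n hn (i + 1) (by omega) (A * ((i : ℝ) + 1) ^ (-(1 + s / 2)))
      (by positivity)
    simp only [Nat.add_sub_cancel] at htail_i
    refine (measure_increment_gt_toReal_le_of_condExp_le (hadapt n) i htail_i).trans ?_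
    gcongr
    linarith [mul_le_mul_of_nonneg_left (le_mul_rpow_mul_rpow_of_mul_rpow_le hA.le (by positivity)
      (hcpos i).le (Nat.cast_nonneg n) (hc_lower i)) hC₂.le]
  have hbound (n : ℕ) (hn : 1 ≤ n) (T : ℕ) :
      (μ {ω | δ ≤ l2norm (θhat n T ω - θstar)}).toReal
        ≤ C₁ * ∑' i : ℕ, Real.exp (-(B * n ^ κ * ((i : ℝ) + 1) ^ (γ * s / 2))) := by
    rw [← tsum_mul_left]
    exact measure_dist_ge_toReal_le_tsum (h0 n) hbudget
      ((summable_exp_neg_mul_succ_rpow (by positivity) (by positivity)).mul_left C₁)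
      (hstep n hn) T
  refine tendsto_limsup_zero_of_nonneg_of_le (fun n T ↦ ENNReal.toReal_nonneg)
    ((eventually_ge_atTop 1).mono hbound) ?_
  have hexponent : Tendsto (fun n : ℕ ↦ B * (n : ℝ) ^ κ) atTop atTop :=
    ((tendsto_rpow_atTop hκ).comp tendsto_natCast_atTop_atTop).const_mul_atTop (by positivity)
  simpa using ((tendsto_tsum_exp_neg_mul_rpow (by positivity)).comp hexponent).const_mul C₁

/-- For recursive estimation processes `(θ̂_t^{(n)})` with `θ̂_0^{(n)} = θ*`,
per-step conditional tail bound with rate function `r(m) = m^κ` (`κ > 0`) and sample sizes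
`n_0 = n`, `n_t = c_t n`, where `a₁ t^{γ(1+s)/κ} ≤ c_t ≤ a₂ t^{γ(1+s)/κ}` for some
`a₁, a₂ > 0` and `s > 0`, for every `δ > 0`:
`lim_{n→∞} limsup_{T→∞} P(‖θ̂_T^{(n)} − θ*‖₂ ≥ δ) = 0`. -/
theorem stmt_4
    {Ω : Type} [mΩ : MeasurableSpace Ω] (μ : Measure Ω) [IsProbabilityMeasure μ]
    (p : ℕ) (hp : 1 ≤ p) (θstar : Fin p → ℝ)
    (C₁ C₂ γ κ s a₁ a₂ : ℝ) (hC₁ : 0 < C₁) (hC₂ : 0 < C₂) (hγ : 0 < γ) (hκ : 0 < κ)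
    (hs : 0 < s) (ha₁ : 0 < a₁) (ha₂ : 0 < a₂)
    (c : ℕ → ℝ) (hcpos : ∀ t, 0 < c t) (hc0 : c 0 = 1)
    (hcsched : ∀ t : ℕ, 1 ≤ t →
      a₁ * (t : ℝ) ^ (γ * (1 + s) / κ) ≤ c t ∧ c t ≤ a₂ * (t : ℝ) ^ (γ * (1 + s) / κ))
    (F : ℕ → Filtration ℕ mΩ)
    (θhat : ℕ → ℕ → Ω → (Fin p → ℝ))
    (hadapt : ∀ n, Adapted (F n) (θhat n))
    (h0 : ∀ n, ∀ᵐ ω ∂μ, θhat n 0 ω = θstar)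
    (htail : ∀ n : ℕ, 1 ≤ n → ∀ t : ℕ, 1 ≤ t → ∀ δ' : ℝ, 0 < δ' →
      ∀ᵐ ω ∂μ,
        (μ[Set.indicator {ω' | δ' < l2norm (θhat n t ω' - θhat n (t - 1) ω')}
            (fun _ => (1 : ℝ)) | (F n) (t - 1)]) ω
          ≤ C₁ * Real.exp (-C₂ * (c (t - 1) * n) ^ κ * δ' ^ γ)) :
    ∀ δ : ℝ, 0 < δ →
      Tendsto (fun n : ℕ =>
          limsup (fun T : ℕ => (μ {ω | δ ≤ l2norm (θhat n T ω - θstar)}).toReal) atTop)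
        atTop (nhds 0) :=
  stmt_4_general (mΩ := mΩ) μ p θstar C₁ C₂ γ κ s a₁ a₂ hC₁ hC₂ hγ hκ hs ha₁ c hcpos hcsched F θhat
    hadapt h0 htail
end

section
/- Let κ, γ, ρ, C₁, C₂ > 0 and let (X_n)_{n≥1} be real-valued random variables such that for every n ≥ 1 and every δ > 0, P(|X_n| ≥ δ) ≤ C₁ exp(−C₂ · n^κ · δ^γ), and such that there exist constants c₀ > 0 and v > 0 with |E[X_n]| ≥ c₀ · v · n^{−ρ} for all n ≥ 1. Then ρ ≥ κ/γ. -/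
open MeasureTheory ProbabilityTheory Filter
open Set Real Topology

lemma tail_moment_bound {Ω : Type} [MeasurableSpace Ω] (μ : Measure Ω) [IsProbabilityMeasure μ]
    (Y : Ω → ℝ) (hY : Measurable Y) (hInt : Integrable Y μ)
    (γ A δ C₁ : ℝ) (hγ : 0 < γ) (hA : 0 < A) (hAγ : 2 ≤ A * γ)
    (hδ : 0 < δ) (hδ1 : δ ≤ 1) (hC₁ : 0 < C₁)
    (htail : ∀ t : ℝ, 0 < t → (μ {ω | t ≤ |Y ω|}).toReal ≤ C₁ * Real.exp (-(A * t ^ γ))) :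
    |∫ ω, Y ω ∂μ| ≤ δ + 2 * C₁ * Real.exp (-(A * δ ^ γ)) := by
  have habs : |∫ ω, Y ω ∂μ| ≤ ∫ ω, |Y ω| ∂μ := by
    simpa [Real.norm_eq_abs] using norm_integral_le_integral_norm (μ := μ) Y
  have hIntAbs : Integrable (fun ω => |Y ω|) μ := hInt.abs
  have key : ENNReal.ofReal (∫ ω, |Y ω| ∂μ) = ∫⁻ ω, ENNReal.ofReal |Y ω| ∂μ :=
    ofReal_integral_eq_lintegral_ofReal hIntAbs (ae_of_all _ fun ω => abs_nonneg _)
  have layer : ∫⁻ ω, ENNReal.ofReal |Y ω| ∂μ = ∫⁻ t in Ioi (0:ℝ), μ {ω | t < |Y ω|} :=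
    lintegral_eq_lintegral_meas_lt μ (ae_of_all _ fun ω => abs_nonneg _) hY.abs.aemeasurable
  -- tail measure bound in ENNReal form
  have htail' : ∀ t : ℝ, 0 < t →
      μ {ω | t ≤ |Y ω|} ≤ ENNReal.ofReal (C₁ * Real.exp (-(A * t ^ γ))) := by
    intro t ht
    calc μ {ω | t ≤ |Y ω|} = ENNReal.ofReal (μ {ω | t ≤ |Y ω|}).toReal :=
          (ENNReal.ofReal_toReal (measure_ne_top μ _)).symm
      _ ≤ _ := ENNReal.ofReal_le_ofReal (htail t ht)
  -- split the integral
  have hsplit1 : (Ioc (0:ℝ) δ) ∪ (Ioi δ) = Ioi 0 := Ioc_union_Ioi_eq_Ioi hδ.le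
  have hsplit2 : (Ioc δ (1:ℝ)) ∪ (Ioi 1) = Ioi δ := Ioc_union_Ioi_eq_Ioi hδ1
  have b1 : ∫⁻ t in Ioc (0:ℝ) δ, μ {ω | t < |Y ω|} ≤ ENNReal.ofReal δ := by
    calc ∫⁻ t in Ioc (0:ℝ) δ, μ {ω | t < |Y ω|} ≤ ∫⁻ _ in Ioc (0:ℝ) δ, 1 :=
          setLIntegral_mono measurable_const fun t _ => prob_le_one
      _ = volume (Ioc (0:ℝ) δ) := setLIntegral_one _
      _ = ENNReal.ofReal δ := by rw [Real.volume_Ioc]; norm_num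
  have b2 : ∫⁻ t in Ioc δ (1:ℝ), μ {ω | t < |Y ω|} ≤
      ENNReal.ofReal (C₁ * Real.exp (-(A * δ ^ γ))) := by
    calc ∫⁻ t in Ioc δ (1:ℝ), μ {ω | t < |Y ω|}
        ≤ ∫⁻ _ in Ioc δ (1:ℝ), ENNReal.ofReal (C₁ * Real.exp (-(A * δ ^ γ))) := by
          refine setLIntegral_mono measurable_const fun t ht => ?_
          refine le_trans (measure_mono fun ω hω => ?_) (htail' δ hδ)
          exact le_trans ht.1.le (le_of_lt hω)
      _ = ENNReal.ofReal (C₁ * Real.exp (-(A * δ ^ γ))) * volume (Ioc δ (1:ℝ)) :=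
          setLIntegral_const _ _
      _ ≤ ENNReal.ofReal (C₁ * Real.exp (-(A * δ ^ γ))) * 1 := by
          gcongr
          rw [Real.volume_Ioc]
          exact ENNReal.ofReal_le_one.2 (by linarith)
      _ = _ := mul_one _
  have b3 : ∫⁻ t in Ioi (1:ℝ), μ {ω | t < |Y ω|} ≤ ENNReal.ofReal (C₁ * Real.exp (-A)) := by
    have hpt : ∀ t ∈ Ioi (1:ℝ), μ {ω | t < |Y ω|} ≤
        ENNReal.ofReal ((C₁ * Real.exp (-A)) * t ^ (-2:ℝ)) := by
      intro t ht
      have ht1 : (1:ℝ) < t := ht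
      have ht0 : (0:ℝ) < t := by linarith
      have hlog : 0 ≤ Real.log t := Real.log_nonneg ht1.le
      have hexp : t ^ γ = Real.exp (Real.log t * γ) := Real.rpow_def_of_pos ht0 γ
      have h1 : Real.log t * γ + 1 ≤ t ^ γ := by
        rw [hexp]; exact Real.add_one_le_exp _
      have h2 : A + 2 * Real.log t ≤ A * t ^ γ := by
        have : A * (Real.log t * γ + 1) ≤ A * t ^ γ := by nlinarith
        nlinarith
      have h3 : Real.exp (-(A * t ^ γ)) ≤ Real.exp (-A) * t ^ (-2:ℝ) := by
        have : t ^ (-2:ℝ) = Real.exp (Real.log t * (-2)) := Real.rpow_def_of_pos ht0 _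
        rw [this, ← Real.exp_add]
        apply Real.exp_le_exp.2
        nlinarith
      calc μ {ω | t < |Y ω|} ≤ μ {ω | t ≤ |Y ω|} := measure_mono fun ω hω => show t ≤ |Y ω| from le_of_lt hω
        _ ≤ ENNReal.ofReal (C₁ * Real.exp (-(A * t ^ γ))) := htail' t ht0
        _ ≤ ENNReal.ofReal ((C₁ * Real.exp (-A)) * t ^ (-2:ℝ)) := by
            apply ENNReal.ofReal_le_ofReal; nlinarith [Real.exp_pos (-(A * t^γ))]
    have hint2 : IntegrableOn (fun t : ℝ => (C₁ * Real.exp (-A)) * t ^ (-2:ℝ)) (Ioi 1) :=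
      (integrableOn_Ioi_rpow_of_lt (by norm_num) one_pos).const_mul _
    calc ∫⁻ t in Ioi (1:ℝ), μ {ω | t < |Y ω|}
        ≤ ∫⁻ t in Ioi (1:ℝ), ENNReal.ofReal ((C₁ * Real.exp (-A)) * t ^ (-2:ℝ)) :=
          setLIntegral_mono (by fun_prop) hpt
      _ = ENNReal.ofReal (∫ t in Ioi (1:ℝ), (C₁ * Real.exp (-A)) * t ^ (-2:ℝ)) := by
          rw [← ofReal_integral_eq_lintegral_ofReal hint2]
          filter_upwards [ae_restrict_mem measurableSet_Ioi] with t ht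
          have : (0:ℝ) < t := lt_trans one_pos ht
          positivity
      _ = ENNReal.ofReal (C₁ * Real.exp (-A)) := by
          rw [MeasureTheory.integral_const_mul, integral_Ioi_rpow_of_lt (by norm_num) one_pos]
          norm_num
  -- combine
  have hTA : Real.exp (-A) ≤ Real.exp (-(A * δ ^ γ)) := by
    apply Real.exp_le_exp.2
    have : δ ^ γ ≤ 1 := Real.rpow_le_one hδ.le hδ1 hγ.le
    nlinarith
  have total : ∫⁻ t in Ioi (0:ℝ), μ {ω | t < |Y ω|} ≤
      ENNReal.ofReal (δ + 2 * C₁ * Real.exp (-(A * δ ^ γ))) := by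
    rw [← hsplit1, lintegral_union measurableSet_Ioi (Ioc_disjoint_Ioi le_rfl),
      ← hsplit2, lintegral_union measurableSet_Ioi (Ioc_disjoint_Ioi le_rfl)]
    calc _ ≤ ENNReal.ofReal δ + (ENNReal.ofReal (C₁ * Real.exp (-(A * δ ^ γ))) +
          ENNReal.ofReal (C₁ * Real.exp (-A))) := by gcongr
      _ ≤ _ := by
          rw [← ENNReal.ofReal_add (by positivity) (by positivity),
            ← ENNReal.ofReal_add (by positivity) (by positivity)]
          apply ENNReal.ofReal_le_ofReal
          nlinarith
  have : ENNReal.ofReal (∫ ω, |Y ω| ∂μ) ≤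
      ENNReal.ofReal (δ + 2 * C₁ * Real.exp (-(A * δ ^ γ))) := by
    rw [key, layer]; exact total
  have hfin : ∫ ω, |Y ω| ∂μ ≤ δ + 2 * C₁ * Real.exp (-(A * δ ^ γ)) :=
    (ENNReal.ofReal_le_ofReal_iff (by positivity)).1 this
  linarith


/-- If `(X_n)` are real random variables with
`P(|X_n| ≥ δ) ≤ C₁ exp(−C₂ n^κ δ^γ)` for all `n ≥ 1`, `δ > 0`, and there are `c₀, v > 0`
with `|E[X_n]| ≥ c₀ v n^{−ρ}` for all `n ≥ 1`, then `ρ ≥ κ/γ`. -/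
theorem stmt_6
    {Ω : Type} [MeasurableSpace Ω] (μ : Measure Ω) [IsProbabilityMeasure μ]
    (κ γ ρ C₁ C₂ : ℝ) (hκ : 0 < κ) (hγ : 0 < γ) (hρ : 0 < ρ) (hC₁ : 0 < C₁) (hC₂ : 0 < C₂)
    (X : ℕ → Ω → ℝ) (hXmeas : ∀ n, Measurable (X n))
    (htail : ∀ n : ℕ, 1 ≤ n → ∀ δ : ℝ, 0 < δ →
      (μ {ω | δ ≤ |X n ω|}).toReal ≤ C₁ * Real.exp (-C₂ * (n : ℝ) ^ κ * δ ^ γ))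
    (c₀ v : ℝ) (hc₀ : 0 < c₀) (hv : 0 < v)
    (hbias : ∀ n : ℕ, 1 ≤ n → c₀ * v * (n : ℝ) ^ (-ρ) ≤ |∫ ω, X n ω ∂μ|) :
    κ / γ ≤ ρ := by
  by_contra hcon
  push_neg at hcon
  set ρ' : ℝ := (ρ + κ / γ) / 2 with hρ'def
  have hρρ' : ρ < ρ' := by rw [hρ'def]; linarith
  have hρ'pos : 0 < ρ' := lt_trans hρ hρρ'
  have hε : 0 < κ - γ * ρ' := by
    have hlt : ρ' < κ / γ := by rw [hρ'def]; linarith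
    have := (lt_div_iff₀ hγ).1 hlt
    nlinarith
  set ε : ℝ := κ - γ * ρ' with hεdef
  -- integrability
  have hInt : ∀ n : ℕ, 1 ≤ n → Integrable (X n) μ := by
    intro n hn
    by_contra hni
    have h0 : ∫ ω, X n ω ∂μ = 0 := integral_undef hni
    have := hbias n hn
    rw [h0, abs_zero] at this
    have hpos : 0 < c₀ * v * (n : ℝ) ^ (-ρ) := by
      have : (0:ℝ) < (n:ℝ) := by exact_mod_cast hn
      positivity
    linarith
  -- main inequality for large n
  have hmain : ∀ᶠ n : ℕ in atTop, c₀ * v ≤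
      (n : ℝ) ^ (ρ - ρ') + 2 * C₁ * ((n : ℝ) ^ ρ * Real.exp (-(C₂ * (n : ℝ) ^ ε))) := by
    have hAγ : ∀ᶠ n : ℕ in atTop, 2 ≤ C₂ * (n : ℝ) ^ κ * γ := by
      have h1 : Tendsto (fun n : ℕ => C₂ * (n : ℝ) ^ κ * γ) atTop atTop := by
        apply Tendsto.atTop_mul_const hγ
        exact (tendsto_rpow_atTop hκ).const_mul_atTop hC₂ |>.comp tendsto_natCast_atTop_atTop
      exact h1.eventually_ge_atTop 2
    filter_upwards [hAγ, eventually_ge_atTop 1] with n hn2 hn1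
    have hn0 : (0:ℝ) < (n:ℝ) := by exact_mod_cast hn1
    have hn0' : (1:ℝ) ≤ (n:ℝ) := by exact_mod_cast hn1
    set δ : ℝ := (n : ℝ) ^ (-ρ') with hδdef
    have hδpos : 0 < δ := Real.rpow_pos_of_pos hn0 _
    have hδ1 : δ ≤ 1 := Real.rpow_le_one_of_one_le_of_nonpos hn0' (by linarith)
    have hA : 0 < C₂ * (n : ℝ) ^ κ := by positivity
    have htail' : ∀ t : ℝ, 0 < t → (μ {ω | t ≤ |X n ω|}).toReal ≤
        C₁ * Real.exp (-((C₂ * (n : ℝ) ^ κ) * t ^ γ)) := by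
      intro t ht
      have := htail n hn1 t ht
      convert this using 3
      ring
    have hb := tail_moment_bound μ (X n) (hXmeas n) (hInt n hn1) γ (C₂ * (n : ℝ) ^ κ) δ C₁
      hγ hA hn2 hδpos hδ1 hC₁ htail'
    have hexp : (C₂ * (n : ℝ) ^ κ) * δ ^ γ = C₂ * (n : ℝ) ^ ε := by
      rw [hδdef, ← Real.rpow_mul hn0.le, mul_assoc, ← Real.rpow_add hn0, hεdef]
      congr 1
      ring
    rw [hexp] at hb
    have h1 : (n:ℝ) ^ (-ρ) * (n:ℝ) ^ ρ = 1 := by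
      rw [← Real.rpow_add hn0]; norm_num
    have h2 : δ * (n:ℝ) ^ ρ = (n:ℝ) ^ (ρ - ρ') := by
      rw [hδdef, ← Real.rpow_add hn0]; congr 1; ring
    calc c₀ * v = c₀ * v * ((n:ℝ) ^ (-ρ) * (n:ℝ) ^ ρ) := by rw [h1, mul_one]
      _ = (c₀ * v * (n:ℝ) ^ (-ρ)) * (n:ℝ) ^ ρ := by ring
      _ ≤ (δ + 2 * C₁ * Real.exp (-(C₂ * (n:ℝ) ^ ε))) * (n:ℝ) ^ ρ :=
          mul_le_mul_of_nonneg_right (le_trans (hbias n hn1) hb) (Real.rpow_nonneg hn0.le _)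
      _ = (n : ℝ) ^ (ρ - ρ') + 2 * C₁ * ((n : ℝ) ^ ρ * Real.exp (-(C₂ * (n : ℝ) ^ ε))) := by
          rw [add_mul, h2]; ring
  -- limits
  have hlim1 : Tendsto (fun x : ℝ => x ^ (ρ - ρ')) atTop (𝓝 0) := by
    simpa [neg_sub] using tendsto_rpow_neg_atTop (show 0 < ρ' - ρ by linarith)
  have hlim2 : Tendsto (fun x : ℝ => x ^ ρ * Real.exp (-(C₂ * x ^ ε))) atTop (𝓝 0) := by
    have base := tendsto_rpow_mul_exp_neg_mul_atTop_nhds_zero (ρ / ε) C₂ hC₂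
    have comp := base.comp (tendsto_rpow_atTop hε)
    apply comp.congr'
    filter_upwards [eventually_gt_atTop 0] with x hx
    have hρε : ε * (ρ / ε) = ρ := by field_simp
    simp only [Function.comp_apply]
    rw [← Real.rpow_mul hx.le, hρε, neg_mul]
  have hlimtot : Tendsto (fun n : ℕ =>
      (n : ℝ) ^ (ρ - ρ') + 2 * C₁ * ((n : ℝ) ^ ρ * Real.exp (-(C₂ * (n : ℝ) ^ ε))))
      atTop (𝓝 (0 + 2 * C₁ * 0)) :=
    (hlim1.comp tendsto_natCast_atTop_atTop).add
      ((hlim2.comp tendsto_natCast_atTop_atTop).const_mul (2 * C₁))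
  have hfin : c₀ * v ≤ 0 + 2 * C₁ * 0 := ge_of_tendsto hlimtot hmain
  have : 0 < c₀ * v := mul_pos hc₀ hv
  norm_num at hfin
  linarith
end

section
/- For each integer n ≥ 1, consider a recursive estimation process (θ̂_t^{(n)})_{t≥0} with θ̂_0^{(n)} = θ*, per-step conditional tail bound with rate function r(m) = m^κ where κ ≥ γ/2, sample sizes n_0 = n, n_t = c_t·n with c_t = t^{1+s}, and conditional bias of order ρ with κ/γ ≤ ρ < 1: there exist constants 0 < b₁ ≤ b₂ and nonnegative reals v_1, …, v_p, with v_i > 0 for at least one coordinate i, such that for every t ≥ 1 and every coordinate i, almost surely b₁ · v_i · n_{t−1}^{−ρ} ≤ E[θ̂_{t,i}^{(n)} | F_{t−1}] − θ̂_{t−1,i}^{(n)} ≤ b₂ · v_i · n_{t−1}^{−ρ}. Then for every δ > 0: (a) if s > 1/ρ − 1, lim_{n→∞} limsup_{T→∞} P(‖θ̂_T^{(n)} − θ*‖₂ ≥ δ) = 0; (b) if 0 < s < 1/ρ − 1, then for every fixed n, lim_{T→∞} P(‖θ̂_T^{(n)} − θ*‖₂ ≥ δ) = 1. -/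
/-!
Fix a coordinate `i` and split `θ̂_{t,i}` into its Doob decomposition: a martingale `M` plus the
predictable part `A_T = ∑_{t<T} (E[θ̂_{t+1,i} | F_t] - θ̂_{t,i})`. By the layer-cake formula the
tail bound gives `E[(θ̂_{t+1,i} - θ̂_{t,i})²] ≲ n_t^{-2κ/γ}`, and since martingale increments are
orthogonal and conditioning decreases second moments, `E[(M_T - M_0)²] ≲ n^{-2κ/γ} ∑_t c_t^{-2κ/γ}`,
a convergent series because `(1 + s) 2κ/γ > 1`. The bias hypothesis squeezes `A_T` between
`b₁ v_i n^{-ρ} ∑_{t<T} c_t^{-ρ}` and `b₂ v_i n^{-ρ} ∑_{t<T} c_t^{-ρ}`, and `∑ c_t^{-ρ}` converges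
iff `(1 + s) ρ > 1`, i.e. iff `s > 1/ρ - 1`.
In case (a), uniformly in `T`, the martingale part is `O(n^{-κ/γ})` in `L²` and the drift is
`O(n^{-ρ})`, so Chebyshev's inequality for `‖θ̂_T - θ*‖₂` gives the claim. In case (b) the drift
of a coordinate with `v_i > 0` tends to infinity with `T` while `M_T - M_0` stays bounded in `L²`,
so `|θ̂_{T,i} - θ*_i| ≥ δ` with probability tending to one.
-/

open MeasureTheory ProbabilityTheory Filter Set Real Topology

section L2Norm

variable {p : ℕ}

lemma abs_apply_le_l2norm (x : Fin p → ℝ) (i : Fin p) : |x i| ≤ l2norm x := by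
  rw [l2norm, ← sqrt_sq_eq_abs]
  exact sqrt_le_sqrt (Finset.single_le_sum (f := fun j => x j ^ 2)
    (fun j _ => sq_nonneg _) (Finset.mem_univ i))

lemma l2norm_nonneg (x : Fin p → ℝ) : 0 ≤ l2norm x := sqrt_nonneg _

lemma l2norm_sq (x : Fin p → ℝ) : l2norm x ^ 2 = ∑ i, x i ^ 2 :=
  sq_sqrt (Finset.sum_nonneg fun i _ => sq_nonneg (x i))

lemma measurable_l2norm : Measurable (l2norm : (Fin p → ℝ) → ℝ) := by
  unfold l2norm; fun_prop

end L2Norm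

section Schedule

variable {s : ℝ} {c : ℕ → ℝ}

lemma schedule_pos (hc0 : c 0 = 1) (hc : ∀ t : ℕ, 1 ≤ t → c t = (t : ℝ) ^ ((1 : ℝ) + s))
    (t : ℕ) : 0 < c t := by
  rcases Nat.eq_zero_or_pos t with rfl | ht
  · simp [hc0]
  · rw [hc t ht]; positivity

lemma summable_schedule_rpow_neg_iff (hc : ∀ t : ℕ, 1 ≤ t → c t = (t : ℝ) ^ ((1 : ℝ) + s))
    (e : ℝ) : Summable (fun t => c t ^ (-e)) ↔ 1 < (1 + s) * e := by
  have hshift :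
      (fun t => c (t + 1) ^ (-e)) = fun t : ℕ => ((t + 1 : ℕ) : ℝ) ^ (-((1 + s) * e)) := by
    funext t
    rw [hc (t + 1) t.succ_pos, ← rpow_mul (Nat.cast_nonneg _), neg_mul_eq_mul_neg]
  rw [← summable_nat_add_iff 1, hshift,
    summable_nat_add_iff (f := fun t : ℕ => (t : ℝ) ^ (-((1 + s) * e))) 1,
    Real.summable_nat_rpow, neg_lt_neg_iff]

lemma sum_range_mul_rpow_neg (hc0 : c 0 = 1) (hc : ∀ t : ℕ, 1 ≤ t → c t = (t : ℝ) ^ ((1 : ℝ) + s))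
    {x : ℝ} (hx : 0 ≤ x) (e : ℝ) (T : ℕ) :
    ∑ t ∈ Finset.range T, (c t * x) ^ (-e) = x ^ (-e) * ∑ t ∈ Finset.range T, c t ^ (-e) := by
  rw [Finset.mul_sum]
  exact Finset.sum_congr rfl fun t _ => by rw [mul_rpow ((schedule_pos hc0 hc t).le) hx, mul_comm]

lemma tendsto_sum_range_schedule_rpow_neg (hc0 : c 0 = 1)
    (hc : ∀ t : ℕ, 1 ≤ t → c t = (t : ℝ) ^ ((1 : ℝ) + s)) {e : ℝ} (he : (1 + s) * e ≤ 1) :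
    Tendsto (fun T => ∑ t ∈ Finset.range T, c t ^ (-e)) atTop atTop := by
  rw [← not_summable_iff_tendsto_nat_atTop_of_nonneg
    fun t => rpow_nonneg ((schedule_pos hc0 hc t).le) _, summable_schedule_rpow_neg_iff hc]
  exact he.not_gt

lemma sum_range_mul_rpow_neg_le_tsum (hc0 : c 0 = 1)
    (hc : ∀ t : ℕ, 1 ≤ t → c t = (t : ℝ) ^ ((1 : ℝ) + s)) {e : ℝ} (he : 1 < (1 + s) * e)
    {x : ℝ} (hx : 0 ≤ x) (T : ℕ) :
    ∑ t ∈ Finset.range T, (c t * x) ^ (-e) ≤ x ^ (-e) * ∑' t, c t ^ (-e) := by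
  rw [sum_range_mul_rpow_neg hc0 hc hx]
  gcongr
  exact ((summable_schedule_rpow_neg_iff hc e).2 he).sum_le_tsum _
    fun t _ => rpow_nonneg (schedule_pos hc0 hc t).le _

end Schedule

lemma abs_le_of_mul_le_of_le_mul {a b g P S : ℝ} (h : a * P ≤ g ∧ g ≤ b * P) (hP : 0 ≤ P)
    (hPS : P ≤ S) : |g| ≤ (|a| + |b|) * S := by
  have ha : |a| * P ≤ |a| * S := by gcongr
  have hb : |b| * P ≤ |b| * S := by gcongr
  refine abs_le.2 ⟨?_, ?_⟩
  · nlinarith [neg_abs_le a, abs_nonneg b, h.1]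
  · nlinarith [le_abs_self b, abs_nonneg a, h.2]

lemma tendsto_limsup_of_le_of_tendsto_zero {a : ℕ → ℕ → ℝ} {B : ℕ → ℝ}
    (ha : ∀ n T, 0 ≤ a n T) (haB : ∀ᶠ n in atTop, ∀ T, a n T ≤ B n)
    (hB : Tendsto B atTop (𝓝 0)) : Tendsto (fun n => limsup (a n) atTop) atTop (𝓝 0) := by
  refine tendsto_of_tendsto_of_tendsto_of_le_of_le' tendsto_const_nhds hB ?_ ?_
  · filter_upwards [haB] with n hn
    exact le_limsup_of_frequently_le (Frequently.of_forall (ha n))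
      (isBoundedUnder_of ⟨B n, hn⟩)
  · filter_upwards [haB] with n hn
    exact limsup_le_of_le (isBoundedUnder_of ⟨0, ha n⟩).isCoboundedUnder_le
      (Eventually.of_forall hn)

lemma integral_Ioi_mul_exp_neg_mul_rpow {γ A : ℝ} (hγ : 0 < γ) (hA : 0 < A) :
    ∫ u in Ioi (0 : ℝ), u * exp (-A * u ^ γ) = Gamma (1 + 2 / γ) * A ^ (-(2 / γ)) / 2 := by
  have h := integral_rpow_mul_exp_neg_mul_rpow hγ (show (-1 : ℝ) < 1 by norm_num) hA
  simp only [rpow_one] at h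
  rw [h, add_comm 1 (2 / γ), Gamma_add_one (by positivity)]
  ring_nf

section Probability

variable {Ω : Type*} {m mΩ : MeasurableSpace Ω} {μ : Measure[mΩ] Ω}

lemma lintegral_sq_le_of_tail_le [IsFiniteMeasure μ] {Y : Ω → ℝ} (hY : AEMeasurable Y μ)
    {C γ A : ℝ} (hC : 0 ≤ C) (hγ : 0 < γ) (hA : 0 < A)
    (htail : ∀ u, 0 < u → μ.real {ω | u < |Y ω|} ≤ C * exp (-A * u ^ γ)) :
    ∫⁻ ω, ENNReal.ofReal (Y ω ^ 2) ∂μ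
      ≤ ENNReal.ofReal (C * Gamma (1 + 2 / γ) * A ^ (-(2 / γ))) :=
  calc ∫⁻ ω, ENNReal.ofReal (Y ω ^ 2) ∂μ
      = ENNReal.ofReal 2 * ∫⁻ u in Ioi 0, μ {ω | u < |Y ω|} * ENNReal.ofReal u := by
        have h := lintegral_rpow_eq_lintegral_meas_lt_mul μ (ae_of_all _ fun _ => abs_nonneg _)
          hY.abs two_pos
        norm_num at h
        simpa using h
    _ ≤ ENNReal.ofReal 2 * ∫⁻ u in Ioi 0, ENNReal.ofReal (C * (u * exp (-A * u ^ γ))) := by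
        gcongr 1
        refine setLIntegral_mono' measurableSet_Ioi fun u (hu : 0 < u) => ?_
        rw [mul_left_comm, ENNReal.ofReal_mul hu.le, mul_comm]
        gcongr
        rw [← ofReal_measureReal]
        exact ENNReal.ofReal_le_ofReal (htail u hu)
    _ = ENNReal.ofReal (C * Gamma (1 + 2 / γ) * A ^ (-(2 / γ))) := by
        rw [← ofReal_integral_eq_lintegral_ofReal, integral_const_mul,
          integral_Ioi_mul_exp_neg_mul_rpow hγ hA, ← ENNReal.ofReal_mul two_pos.le]
        · ring_nf
        · simpa using
            (integrableOn_rpow_mul_exp_neg_mul_rpow (s := 1) (by norm_num) hγ hA).const_mul C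
        · exact ae_restrict_of_forall_mem measurableSet_Ioi fun u (hu : 0 < u) => by positivity

lemma memLp_two_and_integral_sq_le_of_tail_le [IsFiniteMeasure μ] {Y : Ω → ℝ}
    (hY : AEMeasurable Y μ) {C γ A : ℝ} (hC : 0 ≤ C) (hγ : 0 < γ) (hA : 0 < A)
    (htail : ∀ u, 0 < u → μ.real {ω | u < |Y ω|} ≤ C * exp (-A * u ^ γ)) :
    MemLp Y 2 μ ∧ ∫ ω, Y ω ^ 2 ∂μ ≤ C * Gamma (1 + 2 / γ) * A ^ (-(2 / γ)) := by
  have hlin := lintegral_sq_le_of_tail_le hY hC hγ hA htail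
  have hmeas := hY.aestronglyMeasurable
  have hsq : 0 ≤ᵐ[μ] fun ω => Y ω ^ 2 := ae_of_all _ fun ω => sq_nonneg (Y ω)
  refine ⟨(memLp_two_iff_integrable_sq hmeas).2 ⟨hmeas.pow 2, ?_⟩, ?_⟩
  · rw [hasFiniteIntegral_iff_ofReal hsq]
    exact hlin.trans_lt ENNReal.ofReal_lt_top
  · rw [integral_eq_lintegral_of_nonneg_ae hsq (hmeas.pow 2)]
    exact ENNReal.toReal_le_of_le_ofReal (by positivity) hlin

lemma measureReal_le_of_condExp_indicator_le [IsProbabilityMeasure μ] (hm : m ≤ mΩ) {s : Set Ω}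
    (hs : MeasurableSet s) {b : ℝ}
    (h : ∀ᵐ ω ∂μ, μ[s.indicator (fun _ => (1 : ℝ)) | m] ω ≤ b) : μ.real s ≤ b :=
  calc μ.real s = ∫ ω, μ[s.indicator (fun _ => (1 : ℝ)) | m] ω ∂μ := by
        rw [integral_condExp hm, ← Pi.one_def, integral_indicator_one hs]
    _ ≤ ∫ _, b ∂μ := integral_mono_ae integrable_condExp (integrable_const b) h
    _ = b := by simp

lemma measureReal_le_abs_le_integral_sq_div {f : Ω → ℝ} (hf : Integrable (fun ω => f ω ^ 2) μ)
    {ε : ℝ} (hε : 0 < ε) : μ.real {ω | ε ≤ |f ω|} ≤ (∫ ω, f ω ^ 2 ∂μ) / ε ^ 2 := by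
  have hset : {ω | ε ≤ |f ω|} = {ω | ε ^ 2 ≤ f ω ^ 2} := by
    ext ω
    simp [sq_le_sq, abs_of_pos hε]
  rw [hset, le_div_iff₀ (by positivity), mul_comm]
  exact mul_meas_ge_le_integral_of_nonneg (ae_of_all _ fun ω => sq_nonneg (f ω)) hf _

lemma measureReal_le_l2norm_le_sum_integral_sq_div {p : ℕ} {Z : Ω → Fin p → ℝ}
    (hZ : ∀ i, MemLp (fun ω => Z ω i) 2 μ) {δ : ℝ} (hδ : 0 < δ) :
    μ.real {ω | δ ≤ l2norm (Z ω)} ≤ (∑ i, ∫ ω, Z ω i ^ 2 ∂μ) / δ ^ 2 := by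
  have hint : Integrable (fun ω => l2norm (Z ω) ^ 2) μ := by
    simp_rw [l2norm_sq]
    exact integrable_finsetSum _ fun i _ => (hZ i).integrable_sq
  calc μ.real {ω | δ ≤ l2norm (Z ω)} = μ.real {ω | δ ≤ |l2norm (Z ω)|} := by
        simp_rw [abs_of_nonneg (l2norm_nonneg _)]
    _ ≤ (∫ ω, l2norm (Z ω) ^ 2 ∂μ) / δ ^ 2 := measureReal_le_abs_le_integral_sq_div hint hδ
    _ = (∑ i, ∫ ω, Z ω i ^ 2 ∂μ) / δ ^ 2 := by
        simp_rw [l2norm_sq]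
        rw [integral_finsetSum _ fun i _ => (hZ i).integrable_sq]

lemma integral_sq_sub_condExp_le [IsFiniteMeasure μ] (hm : m ≤ mΩ)
    {Y : Ω → ℝ} (hY : MemLp Y 2 μ) :
    ∫ ω, (Y ω - μ[Y | m] ω) ^ 2 ∂μ ≤ ∫ ω, Y ω ^ 2 ∂μ :=
  calc ∫ ω, (Y ω - μ[Y | m] ω) ^ 2 ∂μ = ∫ ω, Var[Y; μ | m] ω ∂μ :=
        (integral_condExp hm).symm
    _ ≤ ∫ ω, μ[Y ^ 2 | m] ω ∂μ :=
        integral_mono_ae integrable_condVar integrable_condExp (condVar_ae_le_condExp_sq hm hY)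
    _ = ∫ ω, Y ω ^ 2 ∂μ := integral_condExp hm

variable {F : Filtration ℕ mΩ}

lemma MeasureTheory.Martingale.integral_mul_sub_eq_zero [IsFiniteMeasure μ] {M : ℕ → Ω → ℝ}
    (hM : Martingale M F μ) (hM2 : ∀ t, MemLp (M t) 2 μ) {Z : Ω → ℝ} (t : ℕ)
    (hZ : StronglyMeasurable[F t] Z) (hZ2 : MemLp Z 2 μ) :
    ∫ ω, Z ω * (M (t + 1) ω - M t ω) ∂μ = 0 := by
  have hD : Integrable (M (t + 1) - M t) μ := (hM.integrable _).sub (hM.integrable _)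
  have hcond : μ[M (t + 1) - M t | F t] =ᵐ[μ] 0 := by
    filter_upwards [condExp_sub (m := F t) (hM.integrable (t + 1)) (hM.integrable t),
      hM.condExp_ae_eq t.le_succ, hM.condExp_ae_eq (le_refl t)] with ω h h1 h2
    simp [h, h1, h2]
  calc ∫ ω, Z ω * (M (t + 1) ω - M t ω) ∂μ = ∫ ω, μ[Z * (M (t + 1) - M t) | F t] ω ∂μ :=
        (integral_condExp (F.le t)).symm
    _ = 0 := by
      rw [integral_congr_ae ((condExp_mul_of_stronglyMeasurable_left hZ
        (hZ2.integrable_mul ((hM2 _).sub (hM2 _))) hD).trans (EventuallyEq.rfl.mul hcond))]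
      simp

lemma MeasureTheory.Martingale.integral_sq_sub_zero_eq_sum [IsFiniteMeasure μ] {M : ℕ → Ω → ℝ}
    (hM : Martingale M F μ) (hM2 : ∀ t, MemLp (M t) 2 μ) (T : ℕ) :
    ∫ ω, (M T ω - M 0 ω) ^ 2 ∂μ = ∑ t ∈ Finset.range T, ∫ ω, (M (t + 1) ω - M t ω) ^ 2 ∂μ := by
  induction T with
  | zero => simp
  | succ T ih =>
    have hZ : StronglyMeasurable[F T] (M T - M 0) :=
      (hM.stronglyMeasurable T).sub ((hM.stronglyMeasurable 0).mono (F.mono T.zero_le))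
    have horth := hM.integral_mul_sub_eq_zero hM2 T hZ ((hM2 T).sub (hM2 0))
    have hZ2 : Integrable (fun ω => (M T ω - M 0 ω) ^ 2) μ :=
      ((hM2 T).sub (hM2 0)).integrable_sq
    have hD2 : Integrable (fun ω => (M (T + 1) ω - M T ω) ^ 2) μ :=
      ((hM2 (T + 1)).sub (hM2 T)).integrable_sq
    have hZD : Integrable (fun ω => (M T ω - M 0 ω) * (M (T + 1) ω - M T ω)) μ :=
      ((hM2 T).sub (hM2 0)).integrable_mul ((hM2 (T + 1)).sub (hM2 T))
    calc ∫ ω, (M (T + 1) ω - M 0 ω) ^ 2 ∂μ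
        = ∫ ω, ((M T ω - M 0 ω) ^ 2 + 2 * ((M T ω - M 0 ω) * (M (T + 1) ω - M T ω))
            + (M (T + 1) ω - M T ω) ^ 2) ∂μ := by congr 1; ext ω; ring
      _ = ∫ ω, (M T ω - M 0 ω) ^ 2 ∂μ + ∫ ω, (M (T + 1) ω - M T ω) ^ 2 ∂μ := by
        rw [integral_add (by exact hZ2.add (hZD.const_mul 2)) hD2,
          integral_add hZ2 (hZD.const_mul 2), integral_const_mul]
        simp only [Pi.sub_apply] at horth
        rw [horth]; ring
      _ = _ := by rw [ih, Finset.sum_range_succ]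

variable {X : ℕ → Ω → ℝ} {x₀ : ℝ}

lemma memLp_of_memLp_sub (hX0 : MemLp (X 0) 2 μ)
    (hY : ∀ t, MemLp (fun ω => X (t + 1) ω - X t ω) 2 μ) (t : ℕ) : MemLp (X t) 2 μ := by
  induction t with
  | zero => exact hX0
  | succ t ih => convert ih.add (hY t) using 1; ext ω; simp

lemma memLp_predictablePart (hX2 : ∀ t, MemLp (X t) 2 μ) (T : ℕ) :
    MemLp (predictablePart X F μ T) 2 μ :=
  memLp_finsetSum' _ fun t _ => ((hX2 (t + 1)).sub (hX2 t)).condExp one_le_two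

lemma memLp_martingalePart (hX2 : ∀ t, MemLp (X t) 2 μ) (T : ℕ) :
    MemLp (martingalePart X F μ T) 2 μ :=
  (hX2 T).sub (memLp_predictablePart hX2 T)

lemma integral_sq_martingalePart_sub_le [IsFiniteMeasure μ] (hX : StronglyAdapted F X)
    (hX2 : ∀ t, MemLp (X t) 2 μ) (T : ℕ) :
    ∫ ω, (martingalePart X F μ T ω - X 0 ω) ^ 2 ∂μ
      ≤ ∑ t ∈ Finset.range T, ∫ ω, (X (t + 1) ω - X t ω) ^ 2 ∂μ := by
  have hM := martingale_martingalePart (μ := μ) hX fun t => (hX2 t).integrable one_le_two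
  have hincr : ∀ t, martingalePart X F μ (t + 1) - martingalePart X F μ t
      = (X (t + 1) - X t) - μ[X (t + 1) - X t | F t] := by
    intro t
    simp only [martingalePart, predictablePart_add_one]
    abel
  rw [← martingalePart_zero (f := X) (ℱ := F) (μ := μ),
    hM.integral_sq_sub_zero_eq_sum (memLp_martingalePart hX2) T]
  refine Finset.sum_le_sum fun t _ => ?_
  simpa only [← Pi.sub_apply, hincr] using
    integral_sq_sub_condExp_le (F.le t) ((hX2 (t + 1)).sub (hX2 t))

lemma predictablePart_mem_Icc [IsFiniteMeasure μ] {lo hi : ℕ → ℝ} (hX : StronglyAdapted F X)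
    (hXi : ∀ t, Integrable (X t) μ)
    (hbias : ∀ t, ∀ᵐ ω ∂μ,
      lo t ≤ μ[X (t + 1) | F t] ω - X t ω ∧ μ[X (t + 1) | F t] ω - X t ω ≤ hi t) :
    ∀ᵐ ω ∂μ, ∀ T, ∑ t ∈ Finset.range T, lo t ≤ predictablePart X F μ T ω ∧
      predictablePart X F μ T ω ≤ ∑ t ∈ Finset.range T, hi t := by
  have hdrift : ∀ t, μ[X (t + 1) - X t | F t] =ᵐ[μ] μ[X (t + 1) | F t] - X t := fun t =>
    (condExp_sub (hXi (t + 1)) (hXi t) _).trans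
      (EventuallyEq.rfl.sub (condExp_of_stronglyMeasurable (F.le t) (hX t) (hXi t)).eventuallyEq)
  filter_upwards [ae_all_iff.2 hdrift, ae_all_iff.2 hbias] with ω hω hb T
  simp only [predictablePart, Finset.sum_apply, hω, Pi.sub_apply]
  exact ⟨Finset.sum_le_sum fun t _ => (hb t).1, Finset.sum_le_sum fun t _ => (hb t).2⟩

lemma sub_eq_martingalePart_sub_add_predictablePart (hX0 : ∀ᵐ ω ∂μ, X 0 ω = x₀) :
    ∀ᵐ ω ∂μ, ∀ T, X T ω - x₀
      = (martingalePart X F μ T ω - X 0 ω) + predictablePart X F μ T ω := by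
  filter_upwards [hX0] with ω h0 T
  simp only [martingalePart, Pi.sub_apply, h0]
  ring

lemma integral_sq_sub_le [IsProbabilityMeasure μ] (hX : StronglyAdapted F X)
    (hX2 : ∀ t, MemLp (X t) 2 μ) (hX0 : ∀ᵐ ω ∂μ, X 0 ω = x₀) {D : ℝ} (T : ℕ)
    (hG : ∀ᵐ ω ∂μ, |predictablePart X F μ T ω| ≤ D) :
    ∫ ω, (X T ω - x₀) ^ 2 ∂μ
      ≤ 2 * ∑ t ∈ Finset.range T, ∫ ω, (X (t + 1) ω - X t ω) ^ 2 ∂μ + 2 * D ^ 2 := by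
  have hM2 : Integrable (fun ω => (martingalePart X F μ T ω - X 0 ω) ^ 2) μ :=
    ((memLp_martingalePart hX2 T).sub (hX2 0)).integrable_sq
  calc ∫ ω, (X T ω - x₀) ^ 2 ∂μ
      ≤ ∫ ω, (2 * (martingalePart X F μ T ω - X 0 ω) ^ 2 + 2 * D ^ 2) ∂μ := by
        refine integral_mono_ae ((hX2 T).sub (memLp_const x₀)).integrable_sq
          ((hM2.const_mul 2).add (integrable_const _)) ?_
        filter_upwards [sub_eq_martingalePart_sub_add_predictablePart hX0, hG] with ω hω hGω
        rw [hω T]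
        nlinarith [sq_nonneg (martingalePart X F μ T ω - X 0 ω - predictablePart X F μ T ω),
          sq_abs (predictablePart X F μ T ω), abs_nonneg (predictablePart X F μ T ω)]
    _ = 2 * ∫ ω, (martingalePart X F μ T ω - X 0 ω) ^ 2 ∂μ + 2 * D ^ 2 := by
        rw [integral_add (hM2.const_mul 2) (integrable_const _), integral_const_mul]
        simp
    _ ≤ _ := by grw [integral_sq_martingalePart_sub_le hX hX2 T]

lemma one_sub_le_measureReal_le_abs_sub [IsProbabilityMeasure μ] (hX : StronglyAdapted F X)
    (hX2 : ∀ t, MemLp (X t) 2 μ) (hX0 : ∀ᵐ ω ∂μ, X 0 ω = x₀) {L δ : ℝ} (hδL : δ < L) (T : ℕ)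
    (hG : ∀ᵐ ω ∂μ, L ≤ predictablePart X F μ T ω) :
    1 - (∑ t ∈ Finset.range T, ∫ ω, (X (t + 1) ω - X t ω) ^ 2 ∂μ) / (L - δ) ^ 2
      ≤ μ.real {ω | δ ≤ |X T ω - x₀|} := by
  have hmeas : MeasurableSet {ω | δ ≤ |X T ω - x₀|} :=
    measurableSet_le measurable_const
      (((hX T).mono (F.le T)).measurable.sub measurable_const).abs
  have hsmall : μ.real {ω | δ ≤ |X T ω - x₀|}ᶜ
      ≤ μ.real {ω | L - δ ≤ |martingalePart X F μ T ω - X 0 ω|} := by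
    refine ENNReal.toReal_mono (measure_ne_top _ _) (measure_mono_ae ?_)
    filter_upwards [sub_eq_martingalePart_sub_add_predictablePart hX0, hG] with ω hω hGω
      (hlt : ¬δ ≤ |X T ω - x₀|)
    show L - δ ≤ |martingalePart X F μ T ω - X 0 ω|
    rw [hω T] at hlt
    linarith [neg_abs_le (martingalePart X F μ T ω - X 0 ω),
      (abs_lt.1 (not_le.1 hlt)).2]
  rw [probReal_compl_eq_one_sub hmeas] at hsmall
  calc 1 - (∑ t ∈ Finset.range T, ∫ ω, (X (t + 1) ω - X t ω) ^ 2 ∂μ) / (L - δ) ^ 2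
      ≤ 1 - (∫ ω, (martingalePart X F μ T ω - X 0 ω) ^ 2 ∂μ) / (L - δ) ^ 2 := by
        grw [integral_sq_martingalePart_sub_le hX hX2 T]
    _ ≤ 1 - μ.real {ω | L - δ ≤ |martingalePart X F μ T ω - X 0 ω|} := by
        grw [measureReal_le_abs_le_integral_sq_div
          (f := fun ω => martingalePart X F μ T ω - X 0 ω)
          ((memLp_martingalePart hX2 T).sub (hX2 0)).integrable_sq (sub_pos.2 hδL)]
    _ ≤ μ.real {ω | δ ≤ |X T ω - x₀|} := by linarith

end Probability

section Run

variable {Ω : Type*} {mΩ : MeasurableSpace Ω} {μ : Measure Ω} [IsProbabilityMeasure μ]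
  {p : ℕ} {F : Filtration ℕ mΩ} {θ : ℕ → Ω → Fin p → ℝ} {θstar : Fin p → ℝ}

lemma stronglyAdapted_apply (hθ : Adapted F θ) (i : Fin p) :
    StronglyAdapted F fun t ω => θ t ω i :=
  fun t => ((measurable_pi_apply i).comp (hθ t)).stronglyMeasurable

lemma measureReal_lt_abs_sub_apply_le {C₁ C₂ γ : ℝ} {w : ℕ → ℝ} (hθ : Adapted F θ)
    (htail : ∀ t : ℕ, 1 ≤ t → ∀ δ' : ℝ, 0 < δ' → ∀ᵐ ω ∂μ,
      (μ[Set.indicator {ω' | δ' < l2norm (θ t ω' - θ (t - 1) ω')}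
          (fun _ => (1 : ℝ)) | F (t - 1)]) ω ≤ C₁ * exp (-C₂ * w (t - 1) * δ' ^ γ))
    (i : Fin p) (t : ℕ) {u : ℝ} (hu : 0 < u) :
    μ.real {ω | u < |θ (t + 1) ω i - θ t ω i|} ≤ C₁ * exp (-(C₂ * w t) * u ^ γ) := by
  have hmeas : ∀ t, Measurable (θ t) := fun t => (hθ t).mono (F.le t) le_rfl
  calc μ.real {ω | u < |θ (t + 1) ω i - θ t ω i|}
      ≤ μ.real {ω | u < l2norm (θ (t + 1) ω - θ t ω)} :=
        measureReal_mono fun ω (hω : u < _) =>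
          hω.trans_le (abs_apply_le_l2norm (θ (t + 1) ω - θ t ω) i)
    _ ≤ C₁ * exp (-(C₂ * w t) * u ^ γ) := by
        rw [← neg_mul]
        exact measureReal_le_of_condExp_indicator_le (F.le t)
          (measurableSet_lt measurable_const
            (measurable_l2norm.comp ((hmeas (t + 1)).sub (hmeas t))))
          (htail (t + 1) t.succ_pos u hu)

lemma memLp_apply_and_sum_integral_sq_sub_le {C₁ C₂ γ κ s : ℝ} (hC₁ : 0 ≤ C₁) (hC₂ : 0 < C₂)
    (hγ : 0 < γ) (hκγ : γ / 2 ≤ κ) (hs : 0 < s) {c : ℕ → ℝ} (hc0 : c 0 = 1)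
    (hc : ∀ t : ℕ, 1 ≤ t → c t = (t : ℝ) ^ ((1 : ℝ) + s))
    (hadapt : Adapted F θ) (h0 : ∀ᵐ ω ∂μ, θ 0 ω = θstar) {n : ℕ} (hn : 1 ≤ n)
    (htail : ∀ t : ℕ, 1 ≤ t → ∀ δ' : ℝ, 0 < δ' → ∀ᵐ ω ∂μ,
      (μ[Set.indicator {ω' | δ' < l2norm (θ t ω' - θ (t - 1) ω')}
          (fun _ => (1 : ℝ)) | F (t - 1)]) ω ≤ C₁ * exp (-C₂ * (c (t - 1) * n) ^ κ * δ' ^ γ))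
    (i : Fin p) :
    (∀ t, MemLp (fun ω => θ t ω i) 2 μ) ∧
    ∀ T, ∑ t ∈ Finset.range T, ∫ ω, (θ (t + 1) ω i - θ t ω i) ^ 2 ∂μ
      ≤ C₁ * Gamma (1 + 2 / γ) * C₂ ^ (-(2 / γ)) * (∑' t, c t ^ (-(2 * κ / γ)))
        * (n : ℝ) ^ (-(2 * κ / γ)) := by
  have hn0 : (0 : ℝ) < n := by exact_mod_cast hn
  have hcn : ∀ t, 0 < c t * n := fun t => mul_pos (schedule_pos hc0 hc t) hn0
  have hX := stronglyAdapted_apply hadapt i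
  have hXm : ∀ t, Measurable fun ω => θ t ω i := fun t => ((hX t).mono (F.le t)).measurable
  have hmom := fun t => memLp_two_and_integral_sq_le_of_tail_le
    ((hXm (t + 1)).sub (hXm t)).aemeasurable hC₁ hγ (mul_pos hC₂ (rpow_pos_of_pos (hcn t) κ))
    fun u hu => measureReal_lt_abs_sub_apply_le (w := fun t => (c t * n) ^ κ) hadapt htail i t hu
  refine ⟨memLp_of_memLp_sub ((memLp_const (θstar i)).ae_eq
    (by filter_upwards [h0] with ω h; simp [h])) fun t => (hmom t).1, fun T => ?_⟩
  have hsplit : ∀ t, (C₂ * (c t * n) ^ κ) ^ (-(2 / γ))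
      = C₂ ^ (-(2 / γ)) * (c t * n) ^ (-(2 * κ / γ)) := fun t => by
    rw [mul_rpow hC₂.le (rpow_nonneg (hcn t).le _), ← rpow_mul (hcn t).le]
    ring_nf
  have he : 1 < (1 + s) * (2 * κ / γ) := by
    have : 1 ≤ 2 * κ / γ := by rw [le_div_iff₀ hγ]; linarith
    nlinarith
  calc ∑ t ∈ Finset.range T, ∫ ω, (θ (t + 1) ω i - θ t ω i) ^ 2 ∂μ
      ≤ ∑ t ∈ Finset.range T, C₁ * Gamma (1 + 2 / γ) * (C₂ * (c t * n) ^ κ) ^ (-(2 / γ)) :=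
        Finset.sum_le_sum fun t _ => (hmom t).2
    _ = C₁ * Gamma (1 + 2 / γ) * C₂ ^ (-(2 / γ))
          * ∑ t ∈ Finset.range T, (c t * n) ^ (-(2 * κ / γ)) := by
        simp_rw [hsplit, Finset.mul_sum, mul_assoc]
    _ ≤ _ := by
        grw [sum_range_mul_rpow_neg_le_tsum hc0 hc he hn0.le T]
        exact le_of_eq (by ring)

lemma predictablePart_apply_mem_Icc {s ρ b₁ b₂ : ℝ} {v : Fin p → ℝ} {c : ℕ → ℝ}
    (hc0 : c 0 = 1) (hc : ∀ t : ℕ, 1 ≤ t → c t = (t : ℝ) ^ ((1 : ℝ) + s))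
    (hadapt : Adapted F θ) {n : ℕ}
    (hbias : ∀ t : ℕ, 1 ≤ t → ∀ i : Fin p, ∀ᵐ ω ∂μ,
      b₁ * v i * (c (t - 1) * n) ^ (-ρ) ≤ (μ[(fun ω' => θ t ω' i) | F (t - 1)]) ω - θ (t - 1) ω i ∧
      (μ[(fun ω' => θ t ω' i) | F (t - 1)]) ω - θ (t - 1) ω i ≤ b₂ * v i * (c (t - 1) * n) ^ (-ρ))
    (i : Fin p) (hX1 : ∀ t, Integrable (fun ω => θ t ω i) μ) :
    ∀ᵐ ω ∂μ, ∀ T,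
      b₁ * v i * (n : ℝ) ^ (-ρ) * ∑ t ∈ Finset.range T, c t ^ (-ρ)
        ≤ predictablePart (fun t ω => θ t ω i) F μ T ω ∧
      predictablePart (fun t ω => θ t ω i) F μ T ω
        ≤ b₂ * v i * (n : ℝ) ^ (-ρ) * ∑ t ∈ Finset.range T, c t ^ (-ρ) := by
  filter_upwards [predictablePart_mem_Icc (stronglyAdapted_apply hadapt i) hX1
    fun t => by simpa using hbias (t + 1) t.succ_pos i] with ω hω T
  simpa only [← Finset.mul_sum, sum_range_mul_rpow_neg hc0 hc (Nat.cast_nonneg n), mul_assoc]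
    using hω T

lemma tendsto_measureReal_le_l2norm_sub_nhds_one (hadapt : Adapted F θ)
    (h0 : ∀ᵐ ω ∂μ, θ 0 ω = θstar) (i : Fin p) (hX2 : ∀ t, MemLp (fun ω => θ t ω i) 2 μ) {V : ℝ}
    (hvar : ∀ T, ∑ t ∈ Finset.range T, ∫ ω, (θ (t + 1) ω i - θ t ω i) ^ 2 ∂μ ≤ V)
    {L : ℕ → ℝ} (hL : Tendsto L atTop atTop)
    (hG : ∀ᵐ ω ∂μ, ∀ T, L T ≤ predictablePart (fun t ω => θ t ω i) F μ T ω) (δ : ℝ) :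
    Tendsto (fun T => μ.real {ω | δ ≤ l2norm (θ T ω - θstar)}) atTop (𝓝 1) := by
  have hgap : Tendsto (fun T => (L T - δ) ^ 2) atTop atTop :=
    (tendsto_pow_atTop two_ne_zero).comp (tendsto_atTop_add_const_right _ (-δ) hL)
  refine tendsto_of_tendsto_of_tendsto_of_le_of_le' (g := fun T => 1 - V / (L T - δ) ^ 2)
    (by simpa using tendsto_const_nhds.sub (tendsto_const_nhds.div_atTop hgap))
    tendsto_const_nhds ?_ (Eventually.of_forall fun T => measureReal_le_one)
  filter_upwards [hL.eventually_gt_atTop δ] with T hT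
  have h0i : ∀ᵐ ω ∂μ, θ 0 ω i = θstar i := by filter_upwards [h0] with ω h; simp [h]
  calc 1 - V / (L T - δ) ^ 2
      ≤ 1 - (∑ t ∈ Finset.range T, ∫ ω, (θ (t + 1) ω i - θ t ω i) ^ 2 ∂μ) / (L T - δ) ^ 2 := by
        have : 0 < (L T - δ) ^ 2 := by nlinarith
        grw [hvar T]
    _ ≤ μ.real {ω | δ ≤ |θ T ω i - θstar i|} :=
        one_sub_le_measureReal_le_abs_sub (stronglyAdapted_apply hadapt i) hX2 h0i hT T
          (hG.mono fun ω h => h T)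
    _ ≤ μ.real {ω | δ ≤ l2norm (θ T ω - θstar)} :=
        measureReal_mono fun ω (hω : δ ≤ _) => hω.trans (abs_apply_le_l2norm (θ T ω - θstar) i)

end Run

lemma tendsto_limsup_measureReal_le_l2norm_sub_nhds_zero {Ω : Type*} {mΩ : MeasurableSpace Ω}
    {μ : Measure Ω} [IsProbabilityMeasure μ] {p : ℕ} {F : ℕ → Filtration ℕ mΩ}
    {θ : ℕ → ℕ → Ω → Fin p → ℝ} {θstar : Fin p → ℝ} (hadapt : ∀ n, Adapted (F n) (θ n))
    (h0 : ∀ n, ∀ᵐ ω ∂μ, θ n 0 ω = θstar) {K e ρ S : ℝ} {lo hi : Fin p → ℝ} {P : ℕ → ℝ}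
    (he : 0 < e) (hρ : 0 < ρ) (hP : ∀ T, 0 ≤ P T ∧ P T ≤ S)
    (hX2 : ∀ n : ℕ, 1 ≤ n → ∀ i t, MemLp (fun ω => θ n t ω i) 2 μ)
    (hvar : ∀ n : ℕ, 1 ≤ n → ∀ i T,
      ∑ t ∈ Finset.range T, ∫ ω, (θ n (t + 1) ω i - θ n t ω i) ^ 2 ∂μ ≤ K * (n : ℝ) ^ (-e))
    (hG : ∀ n : ℕ, 1 ≤ n → ∀ i, ∀ᵐ ω ∂μ, ∀ T,
      lo i * (n : ℝ) ^ (-ρ) * P T ≤ predictablePart (fun t ω => θ n t ω i) (F n) μ T ω ∧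
      predictablePart (fun t ω => θ n t ω i) (F n) μ T ω ≤ hi i * (n : ℝ) ^ (-ρ) * P T)
    {δ : ℝ} (hδ : 0 < δ) :
    Tendsto (fun n : ℕ => limsup (fun T => μ.real {ω | δ ≤ l2norm (θ n T ω - θstar)}) atTop)
      atTop (𝓝 0) := by
  have hpow : ∀ {q : ℝ}, 0 < q → Tendsto (fun n : ℕ => (n : ℝ) ^ (-q)) atTop (𝓝 0) :=
    fun hq => (tendsto_rpow_neg_atTop hq).comp tendsto_natCast_atTop_atTop
  refine tendsto_limsup_of_le_of_tendsto_zero (fun n T => measureReal_nonneg) ?_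
    (B := fun n : ℕ => (∑ i, (2 * (K * (n : ℝ) ^ (-e))
      + 2 * ((|lo i * (n : ℝ) ^ (-ρ)| + |hi i * (n : ℝ) ^ (-ρ)|) * S) ^ 2)) / δ ^ 2) ?_
  · filter_upwards [eventually_ge_atTop 1] with n hn T
    refine (measureReal_le_l2norm_le_sum_integral_sq_div (Z := fun ω => θ n T ω - θstar)
      (fun i => (hX2 n hn i T).sub (memLp_const _)) hδ).trans ?_
    gcongr with i
    have h0i : ∀ᵐ ω ∂μ, θ n 0 ω i = θstar i := by filter_upwards [h0 n] with ω h; simp [h]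
    simp only [Pi.sub_apply]
    grw [integral_sq_sub_le (stronglyAdapted_apply (hadapt n) i) (hX2 n hn i) h0i T
      ((hG n hn i).mono fun ω h => abs_le_of_mul_le_of_le_mul (h T) (hP T).1 (hP T).2),
      hvar n hn i T]
  · have hlo := fun i => ((hpow hρ).const_mul (lo i)).abs
    have hhi := fun i => ((hpow hρ).const_mul (hi i)).abs
    simpa using (tendsto_finsetSum Finset.univ fun i _ =>
      (((hpow he).const_mul K).const_mul 2).add
        ((((hlo i).add (hhi i)).mul_const S).pow 2 |>.const_mul 2)).div_const (δ ^ 2)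

theorem stmt_8_general
    {Ω : Type} [mΩ : MeasurableSpace Ω] (μ : Measure Ω) [IsProbabilityMeasure μ]
    (p : ℕ) (θstar : Fin p → ℝ)
    (C₁ C₂ γ κ s ρ b₁ b₂ : ℝ) (hC₁ : 0 < C₁) (hC₂ : 0 < C₂) (hγ : 0 < γ)
    (hκγ : γ / 2 ≤ κ) (hs : 0 < s) (hρl : κ / γ ≤ ρ)
    (hb₁ : 0 < b₁)
    (v : Fin p → ℝ) (hvpos : ∃ i, 0 < v i)
    (c : ℕ → ℝ) (hc0 : c 0 = 1) (hc : ∀ t : ℕ, 1 ≤ t → c t = (t : ℝ) ^ ((1 : ℝ) + s))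
    (F : ℕ → Filtration ℕ mΩ)
    (θhat : ℕ → ℕ → Ω → (Fin p → ℝ))
    (hadapt : ∀ n, Adapted (F n) (θhat n))
    (h0 : ∀ n, ∀ᵐ ω ∂μ, θhat n 0 ω = θstar)
    (htail : ∀ n : ℕ, 1 ≤ n → ∀ t : ℕ, 1 ≤ t → ∀ δ' : ℝ, 0 < δ' →
      ∀ᵐ ω ∂μ,
        (μ[Set.indicator {ω' | δ' < l2norm (θhat n t ω' - θhat n (t - 1) ω')}
            (fun _ => (1 : ℝ)) | (F n) (t - 1)]) ω
          ≤ C₁ * Real.exp (-C₂ * (c (t - 1) * n) ^ κ * δ' ^ γ))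
    (hbias : ∀ n : ℕ, 1 ≤ n → ∀ t : ℕ, 1 ≤ t → ∀ i : Fin p,
      ∀ᵐ ω ∂μ,
        b₁ * v i * (c (t - 1) * n) ^ (-ρ)
            ≤ (μ[(fun ω' => θhat n t ω' i) | (F n) (t - 1)]) ω - θhat n (t - 1) ω i ∧
        (μ[(fun ω' => θhat n t ω' i) | (F n) (t - 1)]) ω - θhat n (t - 1) ω i
            ≤ b₂ * v i * (c (t - 1) * n) ^ (-ρ)) :
    ∀ δ : ℝ, 0 < δ →
      (1 / ρ - 1 < s →
        Tendsto (fun n : ℕ =>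
            limsup (fun T : ℕ => (μ {ω | δ ≤ l2norm (θhat n T ω - θstar)}).toReal) atTop)
          atTop (nhds 0)) ∧
      (s < 1 / ρ - 1 → ∀ n : ℕ, 1 ≤ n →
        Tendsto (fun T : ℕ => (μ {ω | δ ≤ l2norm (θhat n T ω - θstar)}).toReal)
          atTop (nhds 1)) := by
  intro δ hδ
  have hκ : 0 < κ := by linarith
  have hρ : 0 < ρ := (div_pos hκ hγ).trans_le hρl
  have hmom := fun n (hn : 1 ≤ n) => memLp_apply_and_sum_integral_sq_sub_le hC₁.le hC₂ hγ hκγ hs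
    hc0 hc (hadapt n) (h0 n) hn (htail n hn)
  have hdrift := fun n (hn : 1 ≤ n) i => predictablePart_apply_mem_Icc hc0 hc (hadapt n)
    (hbias n hn) i fun t => ((hmom n hn i).1 t).integrable one_le_two
  refine ⟨fun hsa => ?_, fun hsb n hn => ?_⟩
  · have hsum := (summable_schedule_rpow_neg_iff hc ρ).2 ((div_lt_iff₀ hρ).1 (by linarith))
    exact tendsto_limsup_measureReal_le_l2norm_sub_nhds_zero hadapt h0
      (div_pos (mul_pos two_pos hκ) hγ) hρ
      (fun T => ⟨Finset.sum_nonneg fun t _ => rpow_nonneg (schedule_pos hc0 hc t).le _,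
        hsum.sum_le_tsum _ fun t _ => rpow_nonneg (schedule_pos hc0 hc t).le _⟩)
      (fun n hn i => (hmom n hn i).1) (fun n hn i => (hmom n hn i).2) hdrift hδ
  · obtain ⟨i, hvi⟩ := hvpos
    have hdiv := tendsto_sum_range_schedule_rpow_neg hc0 hc ((le_div_iff₀ hρ).1 (by linarith))
    have hn0 : (0 : ℝ) < n := by exact_mod_cast hn
    exact tendsto_measureReal_le_l2norm_sub_nhds_one (hadapt n) (h0 n) i (hmom n hn i).1
      (hmom n hn i).2 (hdiv.const_mul_atTop (mul_pos (mul_pos hb₁ hvi) (rpow_pos_of_pos hn0 _)))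
      ((hdrift n hn i).mono fun ω h T => (h T).1) δ

/-- For recursive estimation processes `(θ̂_t^{(n)})` with `θ̂_0^{(n)} = θ*`,
per-step conditional tail bound with rate `r(m) = m^κ`, `κ ≥ γ/2`, schedule `c_t = t^{1+s}`,
and conditional bias of order `ρ` with `κ/γ ≤ ρ < 1`
(`b₁ v_i n_{t−1}^{−ρ} ≤ E[θ̂_{t,i}|F_{t−1}] − θ̂_{t−1,i} ≤ b₂ v_i n_{t−1}^{−ρ}` a.s., with
`v_i > 0` for some coordinate), for every `δ > 0`:
(a) if `s > 1/ρ − 1` then `lim_{n→∞} limsup_{T→∞} P(‖θ̂_T^{(n)} − θ*‖₂ ≥ δ) = 0`;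
(b) if `0 < s < 1/ρ − 1` then for every fixed `n ≥ 1`,
`lim_{T→∞} P(‖θ̂_T^{(n)} − θ*‖₂ ≥ δ) = 1`. -/
theorem stmt_8
    {Ω : Type} [mΩ : MeasurableSpace Ω] (μ : Measure Ω) [IsProbabilityMeasure μ]
    (p : ℕ) (hp : 1 ≤ p) (θstar : Fin p → ℝ)
    (C₁ C₂ γ κ s ρ b₁ b₂ : ℝ) (hC₁ : 0 < C₁) (hC₂ : 0 < C₂) (hγ : 0 < γ)
    (hκγ : γ / 2 ≤ κ) (hs : 0 < s) (hρl : κ / γ ≤ ρ) (hρu : ρ < 1)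
    (hb₁ : 0 < b₁) (hb₁₂ : b₁ ≤ b₂)
    (v : Fin p → ℝ) (hv : ∀ i, 0 ≤ v i) (hvpos : ∃ i, 0 < v i)
    (c : ℕ → ℝ) (hc0 : c 0 = 1) (hc : ∀ t : ℕ, 1 ≤ t → c t = (t : ℝ) ^ ((1 : ℝ) + s))
    (F : ℕ → Filtration ℕ mΩ)
    (θhat : ℕ → ℕ → Ω → (Fin p → ℝ))
    (hadapt : ∀ n, Adapted (F n) (θhat n))
    (h0 : ∀ n, ∀ᵐ ω ∂μ, θhat n 0 ω = θstar)
    (htail : ∀ n : ℕ, 1 ≤ n → ∀ t : ℕ, 1 ≤ t → ∀ δ' : ℝ, 0 < δ' →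
      ∀ᵐ ω ∂μ,
        (μ[Set.indicator {ω' | δ' < l2norm (θhat n t ω' - θhat n (t - 1) ω')}
            (fun _ => (1 : ℝ)) | (F n) (t - 1)]) ω
          ≤ C₁ * Real.exp (-C₂ * (c (t - 1) * n) ^ κ * δ' ^ γ))
    (hbias : ∀ n : ℕ, 1 ≤ n → ∀ t : ℕ, 1 ≤ t → ∀ i : Fin p,
      ∀ᵐ ω ∂μ,
        b₁ * v i * (c (t - 1) * n) ^ (-ρ)
            ≤ (μ[(fun ω' => θhat n t ω' i) | (F n) (t - 1)]) ω - θhat n (t - 1) ω i ∧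
        (μ[(fun ω' => θhat n t ω' i) | (F n) (t - 1)]) ω - θhat n (t - 1) ω i
            ≤ b₂ * v i * (c (t - 1) * n) ^ (-ρ)) :
    ∀ δ : ℝ, 0 < δ →
      (1 / ρ - 1 < s →
        Tendsto (fun n : ℕ =>
            limsup (fun T : ℕ => (μ {ω | δ ≤ l2norm (θhat n T ω - θstar)}).toReal) atTop)
          atTop (nhds 0)) ∧
      (s < 1 / ρ - 1 → ∀ n : ℕ, 1 ≤ n →
        Tendsto (fun T : ℕ => (μ {ω | δ ≤ l2norm (θhat n T ω - θstar)}).toReal)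
          atTop (nhds 1)) :=
  stmt_8_general (mΩ := mΩ) μ p θstar C₁ C₂ γ κ s ρ b₁ b₂ hC₁ hC₂ hγ hκγ hs hρl hb₁ v hvpos c hc0 hc
    F θhat hadapt h0 htail hbias
end
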